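/- arXiv:2101.12194 — 9 statements merged into one kernel-verified Lean document; each statement's English description precedes it below -/
import Mathlib

section
/- Suppose M trace defines O via an injection τ : O → M^m, and suppose some L'-formula φ(x̄; ȳ) has the independence property in O. Then some formula with parameters from M has the independence property in M. (Consequently, if the theory of M is NIP then so is the theory of any structure trace definable in M.) -/
open FirstOrder FirstOrder.Language

/-- `M` trace defines `O` via the injection `τ : O → M^m`. -/
def TraceDefinesVia (L L' : Language) (M : Type*) (O : Type*)
    [L.Structure M] [L'.Structure O] (m : ℕ) (τ : O → Fin m → M) : Prop :=
  ∀ (n : ℕ) (X : Set (Fin n → O)), Set.Definable (Set.univ : Set O) L' X →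
    ∃ Y : Set (Fin n × Fin m → M), Set.Definable (Set.univ : Set M) L Y ∧
      ∀ a : Fin n → O, a ∈ X ↔ (fun p : Fin n × Fin m => τ (a p.1) p.2) ∈ Y

/-- A definable relation `R ⊆ N^k × N^l` has the independence property if for every `n` there
are tuples `a_i` and `b_I` (for `I ⊆ {0,…,n-1}`) with `R(a_i; b_I)` iff `i ∈ I`. -/
def HasIP {N : Type*} (k l : ℕ) (R : Set (Fin k ⊕ Fin l → N)) : Prop :=
  ∀ n : ℕ, ∃ (a : Fin n → Fin k → N) (b : Finset (Fin n) → Fin l → N),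
    ∀ (i : Fin n) (I : Finset (Fin n)), Sum.elim (a i) (b I) ∈ R ↔ i ∈ I

/-- If `M` trace defines `O` and some definable relation (a formula with parameters) has the
independence property in `O`, then some definable relation has the independence property in `M`.
Consequently `NIP` is preserved under trace definability. -/
theorem ip_of_traceDefines_ip
    (L L' : Language) (M : Type*) (O : Type*) [L.Structure M] [L'.Structure O]
    (m : ℕ) (τ : O → Fin m → M) (hinj : Function.Injective τ)
    (htrace : TraceDefinesVia L L' M O m τ)
    (k l : ℕ) (R : Set (Fin k ⊕ Fin l → O))
    (hRdef : Set.Definable (Set.univ : Set O) L' R)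
    (hRIP : HasIP k l R) :
    ∃ (k' l' : ℕ) (S : Set (Fin k' ⊕ Fin l' → M)),
      Set.Definable (Set.univ : Set M) L S ∧ HasIP k' l' S := by
  -- Reindex R to a subset of O^(k+l)
  set X : Set (Fin (k + l) → O) := (fun v => v ∘ finSumFinEquiv) ⁻¹' R with hX
  have hXdef : Set.Definable (Set.univ : Set O) L' X :=
    hRdef.preimage_comp finSumFinEquiv
  obtain ⟨Y, hYdef, hY⟩ := htrace (k + l) X hXdef
  -- the index equivalence
  let ρ : (Fin (k + l) × Fin m) ≃ (Fin (k * m) ⊕ Fin (l * m)) :=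
    (Equiv.prodCongr finSumFinEquiv.symm (Equiv.refl (Fin m))).trans
      ((Equiv.sumProdDistrib (Fin k) (Fin l) (Fin m)).trans
        (Equiv.sumCongr finProdFinEquiv finProdFinEquiv))
  refine ⟨k * m, l * m, (fun w => w ∘ ρ) ⁻¹' Y, hYdef.preimage_comp ρ, ?_⟩
  intro n
  obtain ⟨a, b, hab⟩ := hRIP n
  refine ⟨fun i j => τ (a i (finProdFinEquiv.symm j).1) (finProdFinEquiv.symm j).2,
    fun I j => τ (b I (finProdFinEquiv.symm j).1) (finProdFinEquiv.symm j).2, ?_⟩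
  intro i I
  rw [← hab i I]
  set v : Fin (k + l) → O := Sum.elim (a i) (b I) ∘ finSumFinEquiv.symm with hvdef
  have h1 : (Sum.elim
      (fun j => τ (a i (finProdFinEquiv.symm j).1) (finProdFinEquiv.symm j).2)
      (fun j => τ (b I (finProdFinEquiv.symm j).1) (finProdFinEquiv.symm j).2)) ∘ ρ
      = fun p : Fin (k + l) × Fin m => τ (v p.1) p.2 := by
    funext p
    obtain ⟨q, r⟩ := p
    simp only [hvdef, Function.comp_apply, ρ, Equiv.trans_apply, Equiv.prodCongr_apply,
      Equiv.coe_refl, Prod.map_apply, id_eq]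
    rcases hq : finSumFinEquiv.symm q with t | t <;>
      simp only [hq, Equiv.sumProdDistrib_apply_left, Equiv.sumProdDistrib_apply_right,
        Equiv.sumCongr_apply, Sum.map_inl, Sum.map_inr, Sum.elim_inl, Sum.elim_inr,
        Equiv.symm_apply_apply]
  have h2 : v ∈ X ↔ Sum.elim (a i) (b I) ∈ R := by
    simp only [hX, Set.mem_preimage, hvdef]
    have : (Sum.elim (a i) (b I) ∘ ⇑finSumFinEquiv.symm) ∘ ⇑finSumFinEquiv
        = Sum.elim (a i) (b I) := by funext q; simp
    rw [this]
  simp only [Set.mem_preimage, h1]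
  rw [← hY v, h2]
end

section
/- Suppose λ is an infinite cardinal with λ ≥ |L*| and the complete L-theory T trace defines the complete L*-theory T*. Then for every model O of T*, every n ∈ ℕ, and every A ⊆ O with |A| ≤ λ, there exist a model M of T, k ∈ ℕ, and B ⊆ M with |B| ≤ λ such that the number of complete n-types of O over A is at most the number of complete k-types of M over B. Consequently, if T is λ-stable then T* is λ-stable. -/
open FirstOrder FirstOrder.Language Cardinal

universe u

/-- A theory `T` trace defines a theory `T'` if every model of `T'` is trace definable in some
model of `T`. -/
def TheoryTraceDefines {L : FirstOrder.Language.{u, u}} {L' : FirstOrder.Language.{u, u}}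
    (T : L.Theory) (T' : L'.Theory) : Prop :=
  ∀ (O : Type u) (SO : L'.Structure O), @Theory.Model L' O SO T' →
    ∃ (M : Type u) (SM : L.Structure M), @Theory.Model L M SM T ∧
      ∃ (m : ℕ) (τ : O → Fin m → M), Function.Injective τ ∧
        @TraceDefinesVia L L' M O SM SO m τ

/-- `p` is a complete `n`-type of `N` over the parameter set `A`: a maximal finitely
realized set of formulas in `n` free variables with parameters from `A`. -/
def IsCompleteNType (L : Language) {N : Type*} [L.Structure N] (A : Set N) (n : ℕ)
    (p : Set (L[[A]].Formula (Fin n))) : Prop :=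
  (∀ s : Finset (L[[A]].Formula (Fin n)), ↑s ⊆ p →
      ∃ a : Fin n → N, ∀ φ ∈ s, Formula.Realize φ a) ∧
    ∀ q : Set (L[[A]].Formula (Fin n)), p ⊆ q →
      (∀ s : Finset (L[[A]].Formula (Fin n)), ↑s ⊆ q →
        ∃ a : Fin n → N, ∀ φ ∈ s, Formula.Realize φ a) →
      q = p

/-- Any finitely realized set of formulas extends to a complete type (Zorn's lemma). -/
lemma finSat_extend {L : Language} {N : Type*} [L.Structure N] {A : Set N} {k : ℕ}
    {p : Set (L[[A]].Formula (Fin k))}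
    (hp : ∀ s : Finset (L[[A]].Formula (Fin k)), ↑s ⊆ p →
      ∃ a : Fin k → N, ∀ φ ∈ s, Formula.Realize φ a) :
    ∃ q, p ⊆ q ∧ IsCompleteNType L A k q := by
  have hzorn : ∀ c ⊆ {r : Set (L[[A]].Formula (Fin k)) |
      ∀ s : Finset (L[[A]].Formula (Fin k)),
      (s : Set (L[[A]].Formula (Fin k))) ⊆ r →
      ∃ a : Fin k → N, ∀ φ ∈ s, Formula.Realize φ a},
      IsChain (· ⊆ ·) c → c.Nonempty →
      ∃ ub ∈ {r : Set (L[[A]].Formula (Fin k)) |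
        ∀ s : Finset (L[[A]].Formula (Fin k)),
        (s : Set (L[[A]].Formula (Fin k))) ⊆ r →
        ∃ a : Fin k → N, ∀ φ ∈ s, Formula.Realize φ a}, ∀ r ∈ c, r ⊆ ub := by
    intro c hcS hchain hcne
    refine ⟨⋃₀ c, ?_, fun r hr => Set.subset_sUnion_of_mem hr⟩
    intro s hs
    rw [Set.sUnion_eq_biUnion] at hs
    obtain ⟨r, hrc, hsr⟩ := (hchain.directedOn).exists_mem_subset_of_finset_subset_biUnion hcne hs
    exact hcS hrc s hsr
  obtain ⟨q, hpq, hqS, hqmax⟩ := zorn_subset_nonempty _ hzorn p hp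
  exact ⟨q, hpq, hqS, fun r hqr hr => subset_antisymm (hqmax hr hqr) hqr⟩

/-- Cardinality bound on formulas. -/
lemma card_formula_le' {L : FirstOrder.Language.{u, u}} {lam : Cardinal.{u}} (hlam : ℵ₀ ≤ lam)
    (hL : L.card ≤ lam) (n : ℕ) : #(L.Formula (Fin n)) ≤ lam := by
  have h1 : #(L.Formula (Fin n)) ≤ #(Σ k, L.BoundedFormula (Fin n) k) :=
    Cardinal.mk_le_of_injective (f := Sigma.mk 0) sigma_mk_injective
  refine h1.trans (BoundedFormula.card_le.trans (max_le hlam ?_))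
  rw [Cardinal.mk_fin, Cardinal.lift_natCast, Cardinal.lift_uzero]
  exact Cardinal.add_le_of_le hlam ((Cardinal.nat_lt_aleph0 n).le.trans hlam) hL

/-- In a complete type, the negation of any non-member is a member. -/
lemma not_mem_complete {L : Language} {N : Type*} [L.Structure N] {A : Set N} {k : ℕ}
    {p : Set (L[[A]].Formula (Fin k))} (hp : IsCompleteNType L A k p)
    (φ : L[[A]].Formula (Fin k)) (hφ : φ ∉ p) : Formula.not φ ∈ p := by
  classical
  have h1 : ¬ (∀ s : Finset (L[[A]].Formula (Fin k)), ↑s ⊆ insert φ p →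
      ∃ a : Fin k → N, ∀ χ ∈ s, Formula.Realize χ a) := by
    intro hfs
    have := hp.2 (insert φ p) (Set.subset_insert _ _) hfs
    exact hφ (this ▸ Set.mem_insert φ p)
  push_neg at h1
  obtain ⟨s0, hs0, hs0un⟩ := h1
  have h2 : ∀ s : Finset (L[[A]].Formula (Fin k)), ↑s ⊆ insert (Formula.not φ) p →
      ∃ a : Fin k → N, ∀ χ ∈ s, Formula.Realize χ a := by
    intro s hs
    obtain ⟨a, ha⟩ := hp.1 ((s.erase (Formula.not φ)) ∪ (s0.erase φ)) (by
      intro χ hχ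
      rcases Finset.mem_union.1 hχ with h | h
      · obtain ⟨hne, hmem⟩ := Finset.mem_erase.1 h
        rcases hs hmem with h' | h'
        · exact absurd h' hne
        · exact h'
      · obtain ⟨hne, hmem⟩ := Finset.mem_erase.1 h
        rcases hs0 hmem with h' | h'
        · exact absurd h' hne
        · exact h')
    refine ⟨a, fun χ hχ => ?_⟩
    by_cases hχφ : χ = Formula.not φ
    · subst hχφ
      rw [Formula.realize_not]
      intro hφa
      obtain ⟨χ', hχ's0, hχ'not⟩ := hs0un a
      by_cases h' : χ' = φ
      · exact hχ'not (h' ▸ hφa)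
      · exact hχ'not (ha χ' (Finset.mem_union_right _ (Finset.mem_erase.2 ⟨h', hχ's0⟩)))
    · exact ha χ (Finset.mem_union_left _ (Finset.mem_erase.2 ⟨hχφ, hχ⟩))
  have := hp.2 (insert (Formula.not φ) p) (Set.subset_insert _ _) h2
  exact this ▸ Set.mem_insert _ _

/-- If `λ ≥ |L'|` is infinite and the complete theory `T` trace defines the complete theory `T'`,
then type counting over small parameter sets transfers from models of `T` to models of `T'`;
consequently `λ`-stability of `T` implies `λ`-stability of `T'`. -/
theorem type_counting_of_theoryTraceDefines
    (L L' : FirstOrder.Language.{u, u}) (T : L.Theory) (T' : L'.Theory)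
    (hT : T.IsComplete) (hT' : T'.IsComplete)
    (lam : Cardinal.{u}) (hlam : ℵ₀ ≤ lam) (hLcard : L'.card ≤ lam)
    (htrace : TheoryTraceDefines T T') :
    (∀ (O : Type u) (SO : L'.Structure O), @Theory.Model L' O SO T' →
      ∀ (n : ℕ) (A : Set O), #A ≤ lam →
        ∃ (M : Type u) (SM : L.Structure M), @Theory.Model L M SM T ∧
          ∃ (k : ℕ) (B : Set M), #B ≤ lam ∧
            #{p : Set (L'[[A]].Formula (Fin n)) // @IsCompleteNType L' O SO A n p} ≤
              #{q : Set (L[[B]].Formula (Fin k)) // @IsCompleteNType L M SM B k q}) ∧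
    ((∀ (M : Type u) (SM : L.Structure M), @Theory.Model L M SM T →
        ∀ (k : ℕ) (B : Set M), #B ≤ lam →
          #{q : Set (L[[B]].Formula (Fin k)) // @IsCompleteNType L M SM B k q} ≤ lam) →
      ∀ (O : Type u) (SO : L'.Structure O), @Theory.Model L' O SO T' →
        ∀ (n : ℕ) (A : Set O), #A ≤ lam →
          #{p : Set (L'[[A]].Formula (Fin n)) // @IsCompleteNType L' O SO A n p} ≤ lam) := by
  classical
  have main : ∀ (O : Type u) (SO : L'.Structure O), @Theory.Model L' O SO T' →
      ∀ (n : ℕ) (A : Set O), #A ≤ lam →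
        ∃ (M : Type u) (SM : L.Structure M), @Theory.Model L M SM T ∧
          ∃ (k : ℕ) (B : Set M), #B ≤ lam ∧
            #{p : Set (L'[[A]].Formula (Fin n)) // @IsCompleteNType L' O SO A n p} ≤
              #{q : Set (L[[B]].Formula (Fin k)) // @IsCompleteNType L M SM B k q} := by
    intro O SO hO n A hA
    letI := SO
    obtain ⟨M, SM, hM, m, τ, hτ, htr⟩ := htrace O SO hO
    letI := SM
    -- translation data for each formula over A
    have hstep : ∀ φ : L'[[A]].Formula (Fin n), ∃ (S : Finset M)
        (Y : Set (Fin n × Fin m → M)),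
        Set.Definable (S : Set M) L Y ∧
        ∀ a : Fin n → O, Formula.Realize φ a ↔ (fun p : Fin n × Fin m => τ (a p.1) p.2) ∈ Y := by
      intro φ
      have hX : Set.Definable (Set.univ : Set O) L' {a : Fin n → O | Formula.Realize φ a} :=
        Set.Definable.mono (⟨φ, rfl⟩ : Set.Definable A L' _) (Set.subset_univ A)
      obtain ⟨Y, hYdef, hYiff⟩ := htr n _ hX
      obtain ⟨S, -, hSdef⟩ := Set.definable_iff_finitely_definable.1 hYdef
      exact ⟨S, Y, hSdef, fun a => hYiff a⟩
    choose S Y hYdef hYiff using hstep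
    set B : Set M := ⋃ φ : L'[[A]].Formula (Fin n), (S φ : Set M) with hBdef
    have hBY : ∀ φ : L'[[A]].Formula (Fin n),
        ∃ θ : L[[B]].Formula (Fin n × Fin m), Y φ = setOf θ.Realize := fun φ =>
      Set.Definable.mono (hYdef φ)
        (Set.subset_iUnion (fun φ : L'[[A]].Formula (Fin n) => (S φ : Set M)) φ)
    choose ψ hψ using hBY
    set e : Fin n × Fin m ≃ Fin (n * m) := finProdFinEquiv with hedef
    set t : L'[[A]].Formula (Fin n) → L[[B]].Formula (Fin (n * m)) :=
      fun φ => (ψ φ).relabel e with htdef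
    set c : (Fin n → O) → (Fin (n * m) → M) :=
      fun a j => τ (a (e.symm j).1) (e.symm j).2 with hcdef
    have key : ∀ (φ : L'[[A]].Formula (Fin n)) (a : Fin n → O),
        Formula.Realize φ a ↔ Formula.Realize (t φ) (c a) := by
      intro φ a
      have h1 : Formula.Realize (t φ) (c a) ↔
          (fun p : Fin n × Fin m => τ (a p.1) p.2) ∈ Y φ := by
        rw [htdef]
        simp only [Formula.realize_relabel]
        have hc : (c a) ∘ e = fun p : Fin n × Fin m => τ (a p.1) p.2 := by
          funext p
          simp [hcdef]
        rw [hc, hψ φ]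
        rfl
      rw [h1]
      exact hYiff φ a
    set E : L'[[A]].Formula (Fin n) → L[[B]].Formula (Fin (n * m)) :=
      fun φ => (t φ).iff (Formula.not (t (Formula.not φ))) with hEdef
    -- finite satisfiability of the translated set
    have hSigfs : ∀ (p : Set (L'[[A]].Formula (Fin n))), IsCompleteNType L' A n p →
        ∀ s : Finset (L[[B]].Formula (Fin (n * m))), ↑s ⊆ (t '' p ∪ Set.range E) →
          ∃ b : Fin (n * m) → M, ∀ χ ∈ s, Formula.Realize χ b := by
      intro p hp s hs
      set u : Finset (L'[[A]].Formula (Fin n)) := s.attach.biUnion (fun χ =>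
        if h : ∃ φ ∈ p, t φ = χ.1 then {h.choose} else ∅) with hudef
      have hup : ↑u ⊆ p := by
        intro φ hφ
        rw [Finset.mem_coe, hudef, Finset.mem_biUnion] at hφ
        obtain ⟨χ, hχ, hmem⟩ := hφ
        split_ifs at hmem with h
        · rw [Finset.mem_singleton] at hmem
          subst hmem
          exact h.choose_spec.1
        · simp at hmem
      obtain ⟨a, ha⟩ := hp.1 u hup
      refine ⟨c a, fun χ hχ => ?_⟩
      by_cases h : ∃ φ ∈ p, t φ = χ
      · obtain ⟨hφp, hφt⟩ := h.choose_spec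
        have hmem : h.choose ∈ u := by
          rw [hudef, Finset.mem_biUnion]
          exact ⟨⟨χ, hχ⟩, Finset.mem_attach _ _, by rw [dif_pos h]; exact Finset.mem_singleton_self _⟩
        have := ha _ hmem
        rw [← hφt]
        exact (key _ a).1 this
      · rcases hs hχ with h' | h'
        · obtain ⟨φ, hφp, hχ'⟩ := h'
          exact absurd ⟨φ, hφp, hχ'⟩ h
        · obtain ⟨φ, rfl⟩ := h'
          rw [hEdef]
          simp only [Formula.realize_iff, Formula.realize_not]
          rw [← key φ a, ← key (Formula.not φ) a, Formula.realize_not, not_not]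
    -- extend each translated type to a complete type
    have hq : ∀ p : {p : Set (L'[[A]].Formula (Fin n)) // IsCompleteNType L' A n p},
        ∃ q : Set (L[[B]].Formula (Fin (n * m))),
          (t '' p.1 ∪ Set.range E) ⊆ q ∧ IsCompleteNType L B (n * m) q := by
      intro p
      exact finSat_extend (hSigfs p.1 p.2)
    choose q hq1 hq2 using hq
    set G : {p : Set (L'[[A]].Formula (Fin n)) // IsCompleteNType L' A n p} →
        {r : Set (L[[B]].Formula (Fin (n * m))) // IsCompleteNType L B (n * m) r} :=
      fun p => ⟨q p, hq2 p⟩ with hGdef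
    have hcontra : ∀ p p' : {p : Set (L'[[A]].Formula (Fin n)) // IsCompleteNType L' A n p},
        ∀ φ, φ ∈ p.1 → φ ∉ p'.1 → G p ≠ G p' := by
      intro p p' φ hφp hφp' heq
      have hnp' : Formula.not φ ∈ p'.1 := not_mem_complete p'.2 φ hφp'
      have hqq : q p' = q p := by
        have := congrArg Subtype.val heq
        simpa [hGdef] using this.symm
      have h1 : t φ ∈ q p := hq1 p (Or.inl ⟨φ, hφp, rfl⟩)
      have h2 : E φ ∈ q p := hq1 p (Or.inr ⟨φ, rfl⟩)
      have h3 : t (Formula.not φ) ∈ q p := by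
        rw [← hqq]
        exact hq1 p' (Or.inl ⟨Formula.not φ, hnp', rfl⟩)
      obtain ⟨b, hb⟩ := (hq2 p).1 {t φ, E φ, t (Formula.not φ)} (by
        intro x hx
        simp only [Finset.coe_insert, Finset.coe_singleton, Set.mem_insert_iff,
          Set.mem_singleton_iff] at hx
        rcases hx with rfl | rfl | rfl
        · exact h1
        · exact h2
        · exact h3)
      have r1 : Formula.Realize (t φ) b := hb _ (by simp)
      have r2 : Formula.Realize (E φ) b := hb _ (by simp)
      have r3 : Formula.Realize (t (Formula.not φ)) b := hb _ (by simp)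
      rw [hEdef] at r2
      simp only [Formula.realize_iff, Formula.realize_not] at r2
      exact (r2.1 r1) r3
    have hGinj : Function.Injective G := by
      intro p p' h
      by_cases hsub : p.1 ⊆ p'.1
      · exact Subtype.ext (p.2.2 p'.1 hsub p'.2.1).symm
      · obtain ⟨φ, hφp, hφp'⟩ := Set.not_subset.1 hsub
        exact absurd h (hcontra p p' φ hφp hφp')
    refine ⟨M, SM, hM, n * m, B, ?_, Cardinal.mk_le_of_injective hGinj⟩
    -- cardinality bound on B
    have hcardF : #(L'[[A]].Formula (Fin n)) ≤ lam := by
      apply card_formula_le' hlam _ n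
      rw [card_withConstants, Cardinal.lift_id, Cardinal.lift_id]
      exact Cardinal.add_le_of_le hlam hLcard hA
    haveI : Nonempty (L'[[A]].Formula (Fin n)) := ⟨⊥⟩
    calc #B ≤ #(L'[[A]].Formula (Fin n)) * ⨆ φ, #((S φ : Set M)) :=
            Cardinal.mk_iUnion_le _
      _ ≤ lam * ℵ₀ := mul_le_mul' hcardF
            (ciSup_le' fun φ => ((S φ).finite_toSet.lt_aleph0).le)
      _ ≤ lam * lam := mul_le_mul' le_rfl hlam
      _ = lam := Cardinal.mul_eq_self hlam
  refine ⟨main, ?_⟩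
  intro H O SO hO n A hA
  obtain ⟨M, SM, hM, k, B, hB, hle⟩ := main O SO hO n A hA
  exact hle.trans (H M SM hM k B hB)
end

section
/- Suppose O ⊆ M^m (where O carries an L'-structure and M an L-structure) and M trace defines O via the identity inclusion O → M^m. Let X ⊆ O^k be definable with parameters in O and Y ⊆ (M^m)^k be definable with parameters in M such that X = Y ∩ O^k. Let λ be a cardinal. If there is an (O, X, λ)-array, then there is an (M, Y, λ)-array (with the same witnessing array of tuples). Consequently the dp-rank of X in O is at most the dp-rank of Y in M. -/
open FirstOrder FirstOrder.Language

universe w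

/-- An `(N, X, ι)`-array: a family, indexed by `ι`, of definable sets (formulas with parameters)
`S_α ⊆ N^{m_α} × N^β` together with an array of tuples `a_{α,i} ∈ N^{m_α}` such that for every
`f : ι → ℕ` there is `b ∈ X` with `S_α(a_{α,i}, b)` iff `f α = i`. -/
def HasArray (L : Language) (N : Type*) [L.Structure N] {β : Type*} (X : Set (β → N))
    (ι : Type*) : Prop :=
  ∃ (m : ι → ℕ) (S : ∀ α : ι, Set (Fin (m α) ⊕ β → N)) (a : ∀ α : ι, ℕ → Fin (m α) → N),
    (∀ α : ι, Set.Definable (Set.univ : Set N) L (S α)) ∧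
    ∀ f : ι → ℕ, ∃ b ∈ X, ∀ (α : ι) (i : ℕ), Sum.elim (a α i) b ∈ S α ↔ f α = i

/-- Suppose `O ⊆ M^m` and `M` trace defines `O` via the identity inclusion, `X ⊆ O^k` is
definable in `O`, `Y ⊆ (M^m)^k` is definable in `M`, and `X = Y ∩ O^k`.  Then for any cardinal
(index type) `ι`, an `(O, X, ι)`-array yields an `(M, Y, ι)`-array.  Consequently the dp-rank of
`X` in `O` is at most the dp-rank of `Y` in `M`. -/
theorem array_transfer_of_trace_via_identity
    (L L' : Language) (M : Type*) [L.Structure M] (m : ℕ)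
    (O : Set (Fin m → M)) [L'.Structure O]
    -- `M` trace defines `O` via the identity inclusion `O → M^m`
    (htrace : ∀ (n : ℕ) (X : Set (Fin n → O)), Set.Definable (Set.univ : Set O) L' X →
      ∃ Y : Set (Fin n × Fin m → M), Set.Definable (Set.univ : Set M) L Y ∧
        ∀ a : Fin n → O, a ∈ X ↔ (fun p : Fin n × Fin m => (a p.1 : Fin m → M) p.2) ∈ Y)
    (k : ℕ) (X : Set (Fin k → O)) (hX : Set.Definable (Set.univ : Set O) L' X)
    (Y : Set (Fin k × Fin m → M)) (hY : Set.Definable (Set.univ : Set M) L Y)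
    (hXY : ∀ a : Fin k → O, a ∈ X ↔ (fun p : Fin k × Fin m => (a p.1 : Fin m → M) p.2) ∈ Y)
    (ι : Type w) (harr : HasArray L' O X ι) :
    HasArray L M Y ι := by
  obtain ⟨m', S, a, hSdef, hArr⟩ := harr
  -- relabel each `S α` to `Fin (m' α + k) → O` and apply `htrace`
  have hT : ∀ α : ι, ∃ Yα : Set (Fin (m' α + k) × Fin m → M),
      Set.Definable (Set.univ : Set M) L Yα ∧
      ∀ g : Fin (m' α + k) → O,
        g ∘ finSumFinEquiv ∈ S α ↔ (fun p : Fin (m' α + k) × Fin m => (g p.1 : Fin m → M) p.2) ∈ Yα := by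
    intro α
    have hdef : Set.Definable (Set.univ : Set O) L'
        ((fun g : Fin (m' α + k) → O => g ∘ finSumFinEquiv) ⁻¹' S α) :=
      (hSdef α).preimage_comp _
    obtain ⟨Yα, hYαdef, hYα⟩ := htrace (m' α + k) _ hdef
    exact ⟨Yα, hYαdef, fun g => hYα g⟩
  choose Yα hYαdef hYα using hT
  -- reindexing map
  refine ⟨fun α => m' α * m, fun α =>
      (fun g : Fin (m' α * m) ⊕ (Fin k × Fin m) → M =>
        g ∘ (fun p : Fin (m' α + k) × Fin m =>
          (finSumFinEquiv.symm p.1).elim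
            (fun u => Sum.inl (finProdFinEquiv (u, p.2)))
            (fun v => Sum.inr (v, p.2)))) ⁻¹' Yα α,
      fun α i w => (a α i (finProdFinEquiv.symm w).1 : Fin m → M) (finProdFinEquiv.symm w).2,
      fun α => (hYαdef α).preimage_comp _, ?_⟩
  intro f
  obtain ⟨b, hbX, hb⟩ := hArr f
  refine ⟨fun p => (b p.1 : Fin m → M) p.2, (hXY b).mp hbX, fun α i => ?_⟩
  have key := hYα α (Sum.elim (a α i) b ∘ finSumFinEquiv.symm)
  have h1 : (Sum.elim (a α i) b ∘ finSumFinEquiv.symm) ∘ ⇑finSumFinEquiv = Sum.elim (a α i) b := by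
    ext x <;> simp [Function.comp]
  rw [h1] at key
  rw [← hb α i, key]
  have heq : (Sum.elim (fun w => (a α i (finProdFinEquiv.symm w).1 : Fin m → M)
        (finProdFinEquiv.symm w).2) (fun p : Fin k × Fin m => (b p.1 : Fin m → M) p.2)) ∘
      (fun p : Fin (m' α + k) × Fin m =>
        (finSumFinEquiv.symm p.1).elim (fun u => Sum.inl (finProdFinEquiv (u, p.2)))
          (fun v => Sum.inr (v, p.2))) =
      fun p : Fin (m' α + k) × Fin m =>
        ((Sum.elim (a α i) b ∘ finSumFinEquiv.symm) p.1 : Fin m → M) p.2 := by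
    funext p
    obtain ⟨q, r⟩ := p
    rcases hq : finSumFinEquiv.symm q with u | v <;>
      simp only [Function.comp_apply, hq, Sum.elim_inl, Sum.elim_inr,
        Equiv.symm_apply_apply]
  simp only [Set.mem_preimage]
  exact iff_of_eq (congrArg (· ∈ Yα α) heq)
end

section
/- Let 𝒰 be the structure with domain {0,1}^ω and, for each σ ∈ {0,1}^{<ω}, a unary relation U_σ interpreted so that U_σ(α) holds if and only if σ is an initial segment of α. Suppose M is an ℵ₁-saturated L-structure and there is a family (X_σ)_{σ ∈ {0,1}^{<ω}} of nonempty subsets of M, each definable with parameters in M, such that for every σ ∈ {0,1}^{<ω}: X_{σ⌢0} ⊆ X_σ, X_{σ⌢1} ⊆ X_σ, and X_{σ⌢0} ∩ X_{σ⌢1} = ∅. Then M trace defines 𝒰 via some injection τ : {0,1}^ω → M. (Hence a theory that is not totally transcendental trace defines 𝒰.) -/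
open FirstOrder FirstOrder.Language

/-- `M` is `ℵ₁`-saturated: every countable finitely realized set of formulas in one free
variable with parameters from `M` is realized in `M`. -/
def Aleph1Saturated (L : Language) (M : Type*) [L.Structure M] : Prop :=
  ∀ Sig : Set (L[[(Set.univ : Set M)]].Formula (Fin 1)), Sig.Countable →
    (∀ s : Finset (L[[(Set.univ : Set M)]].Formula (Fin 1)), ↑s ⊆ Sig →
      ∃ a : Fin 1 → M, ∀ φ ∈ s, Formula.Realize φ a) →
    ∃ a : Fin 1 → M, ∀ φ ∈ Sig, Formula.Realize φ a

/-- The relation symbols of the language of the binary tree structure: one unary relation `U_σ`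
for each finite binary string `σ`. -/
inductive treeRel : ℕ → Type
  | U : List Bool → treeRel 1

/-- The language of the binary tree structure `𝒰`. -/
def treeLang : Language := ⟨fun _ => Empty, treeRel⟩

/-- The structure `𝒰` on Cantor space `{0,1}^ω`, where `U_σ(α)` holds iff `σ` is an initial
segment of `α`. -/
instance : treeLang.Structure (ℕ → Bool) where
  funMap := fun {_} f => nomatch f
  RelMap := fun {n} R x =>
    match n, R with
    | 1, .U σ => ∀ i : Fin σ.length, σ.get i = x 0 i

/-!
By `ℵ₁`-saturation each branch `α` of the tree carries a point `t α ∈ ⋂ₙ X (α↾n)`,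
and disjointness of siblings makes `t` injective. Formulas of `𝒰` are then translated into `M`
by induction: `U_σ(x)` becomes `x ∈ X σ`, a constant `c` becomes `t c`, and a quantifier
becomes a quantifier over the level `⋃_{|s| = k} X s`. The translation is correct on tuples
that agree at level `k`: every `m` lies in `X (α↾k)` for its partner `α`, and both tuples have
the same equality pattern, also against a finite set of constants. Such an agreement extends
by one more point on either side because the sets `X s` and the cylinders of Cantor space are
infinite; this back-and-forth step handles the quantifiers.
-/

lemma Set.definable_setOf_const {L : Language} {M : Type*} [L.Structure M] {A : Set M}
    {α : Type*} (P : Prop) : A.Definable L {_v : α → M | P} := by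
  by_cases hP : P <;> simp [hP]

lemma Aleph1Saturated.nonempty_iInter {L : Language} {M : Type*} [L.Structure M]
    (hsat : Aleph1Saturated L M) {Y : ℕ → Set M}
    (hdef : ∀ n, (Set.univ : Set M).Definable₁ L (Y n)) (hY : Antitone Y)
    (hne : ∀ n, (Y n).Nonempty) : (⋂ n, Y n).Nonempty := by
  choose φ hφ using hdef
  have hrealize (n : ℕ) (v : Fin 1 → M) : (φ n).Realize v ↔ v 0 ∈ Y n :=
    (Set.ext_iff.mp (hφ n) v).symm
  obtain ⟨a, ha⟩ := hsat (Set.range φ) (Set.countable_range φ) fun s hs => by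
    choose! idx hidx using fun ψ (h : ψ ∈ s) => hs h
    obtain ⟨m, hm⟩ := hne (s.sup idx)
    exact ⟨fun _ => m, fun ψ hψ =>
      hidx ψ hψ ▸ (hrealize _ _).mpr (hY (Finset.le_sup hψ) hm)⟩
  exact ⟨a 0, Set.mem_iInter.mpr fun n => (hrealize n a).mp (ha _ ⟨n, rfl⟩)⟩

namespace TraceTree

def initSeg (α : ℕ → Bool) (n : ℕ) : List Bool := List.ofFn fun i : Fin n => α i

@[simp] lemma length_initSeg (α : ℕ → Bool) (n : ℕ) : (initSeg α n).length = n := by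
  simp [initSeg]

@[simp] lemma getElem_initSeg (α : ℕ → Bool) (n i : ℕ) (h : i < (initSeg α n).length) :
    (initSeg α n)[i] = α i := by
  simp [initSeg]

lemma take_initSeg (α : ℕ → Bool) {n k : ℕ} (h : n ≤ k) :
    (initSeg α k).take n = initSeg α n :=
  List.ext_getElem (by simp [h]) fun _ _ _ => by simp

lemma initSeg_prefix (α : ℕ → Bool) {n k : ℕ} (h : n ≤ k) :
    initSeg α n <+: initSeg α k :=
  take_initSeg α h ▸ List.take_prefix _ _

lemma initSeg_length_eq_iff {σ : List Bool} {α : ℕ → Bool} :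
    initSeg α σ.length = σ ↔ ∀ i : Fin σ.length, σ.get i = α i := by
  conv_lhs => rhs; rw [← List.ofFn_get σ]
  rw [initSeg, List.ofFn_inj, funext_iff]
  exact forall_congr' fun _ => eq_comm

lemma prefix_initSeg_iff {σ : List Bool} {α : ℕ → Bool} {k : ℕ} (h : σ.length ≤ k) :
    σ <+: initSeg α k ↔ initSeg α σ.length = σ := by
  rw [List.prefix_iff_eq_take, take_initSeg α h, eq_comm]

lemma infinite_setOf_initSeg_eq (s : List Bool) :
    {α : ℕ → Bool | initSeg α s.length = s}.Infinite := by
  refine Set.infinite_of_injective_forall_mem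
    (f := fun j n => if h : n < s.length then s[n] else decide (n = s.length + j)) ?_ ?_
  · intro i j h
    simpa using congrFun h (s.length + i)
  · intro j
    rw [Set.mem_ofPred_eq, initSeg_length_eq_iff]
    intro i
    simp

lemma exists_initSeg_ne_of_ne {α β : ℕ → Bool} (h : α ≠ β) :
    ∃ n, initSeg α n ≠ initSeg β n := by
  obtain ⟨i, hi⟩ := Function.ne_iff.mp h
  refine ⟨i + 1, fun he => hi ?_⟩
  simpa using List.getElem_of_eq he (i := i) (by simp)

structure IsBinaryTree {M : Type*} (X : List Bool → Set M) : Prop where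
  subset_append : ∀ σ b, X (σ ++ [b]) ⊆ X σ
  disjoint_append : ∀ σ, Disjoint (X (σ ++ [false])) (X (σ ++ [true]))

namespace IsBinaryTree

variable {M : Type*} {X : List Bool → Set M}

lemma subset_of_prefix (hX : IsBinaryTree X) {s t : List Bool} (h : s <+: t) : X t ⊆ X s := by
  obtain ⟨u, rfl⟩ := h
  induction u using List.reverseRecOn with
  | nil => simp
  | append_singleton u b ih =>
    exact (List.append_assoc s u [b] ▸ hX.subset_append _ b).trans ih

lemma disjoint_of_length_eq (hX : IsBinaryTree X) {s t : List Bool}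
    (hl : s.length = t.length) (hst : s ≠ t) : Disjoint (X s) (X t) := by
  induction s using List.reverseRecOn generalizing t with
  | nil => exact absurd (List.length_eq_zero_iff.mp hl.symm).symm hst
  | append_singleton s a ih =>
    obtain ⟨t, b, rfl⟩ : ∃ t' b, t = t' ++ [b] :=
      (List.eq_nil_or_concat' t).resolve_left (by rintro rfl; simp at hl)
    by_cases hs : s = t
    · subst hs
      have hab : a ≠ b := by rintro rfl; exact hst rfl
      cases a <;> cases b
      · exact absurd rfl hab
      · exact hX.disjoint_append s
      · exact (hX.disjoint_append s).symm
      · exact absurd rfl hab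
    · exact (ih (by simpa using hl) hs).mono (hX.subset_append s a) (hX.subset_append t b)

lemma mem_iff_prefix (hX : IsBinaryTree X) {s σ : List Bool} {m : M} (hm : m ∈ X s)
    (hσ : σ.length ≤ s.length) : m ∈ X σ ↔ σ <+: s := by
  refine ⟨fun hmσ => ?_, fun h => hX.subset_of_prefix h hm⟩
  rw [List.prefix_iff_eq_take]
  by_contra hne
  exact (hX.disjoint_of_length_eq (by simp [hσ]) hne).notMem_of_mem_left hmσ
    (hX.subset_of_prefix (List.take_prefix _ _) hm)

end IsBinaryTree

structure IsBranchMap {M : Type*} (X : List Bool → Set M) (t : (ℕ → Bool) → M) : Prop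
    extends IsBinaryTree X where
  mem_initSeg : ∀ α n, t α ∈ X (initSeg α n)

lemma exists_isBranchMap {L : Language} {M : Type*} [L.Structure M]
    (hsat : Aleph1Saturated L M) {X : List Bool → Set M} (hX : IsBinaryTree X)
    (hdef : ∀ σ, (Set.univ : Set M).Definable₁ L (X σ)) (hne : ∀ σ, (X σ).Nonempty) :
    ∃ t, IsBranchMap X t := by
  have hbranch (α : ℕ → Bool) : (⋂ n, X (initSeg α n)).Nonempty :=
    hsat.nonempty_iInter (fun _ => hdef _)
      (fun _ _ h => hX.subset_of_prefix (initSeg_prefix α h)) (fun _ => hne _)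
  choose t ht using hbranch
  exact ⟨t, hX, fun α => Set.mem_iInter.mp (ht α)⟩

namespace IsBranchMap

variable {M : Type*} {X : List Bool → Set M} {t : (ℕ → Bool) → M}

lemma injective (ht : IsBranchMap X t) : Function.Injective t := by
  intro α β h
  by_contra hαβ
  obtain ⟨n, hn⟩ := exists_initSeg_ne_of_ne hαβ
  exact (ht.disjoint_of_length_eq (by simp) hn).notMem_of_mem_left (ht.mem_initSeg α n)
    (h ▸ ht.mem_initSeg β n)

lemma infinite (ht : IsBranchMap X t) (s : List Bool) : (X s).Infinite := by
  refine ((infinite_setOf_initSeg_eq s).image ht.injective.injOn).mono ?_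
  rintro _ ⟨α, hα, rfl⟩
  exact hα ▸ ht.mem_initSeg α s.length

end IsBranchMap

section Agree

variable {M : Type*} (X : List Bool → Set M) (t : (ℕ → Bool) → M)

def Agree (k : ℕ) (C : Finset (ℕ → Bool)) (α : ℕ → Bool) (m : M) : Prop :=
  m ∈ X (initSeg α k) ∧ ∀ c ∈ C, α = c ↔ m = t c

def AgreeTuple {J : Type*} (k : ℕ) (C : Finset (ℕ → Bool)) (v : J → ℕ → Bool)
    (w : J → M) : Prop :=
  (∀ j, Agree X t k C (v j) (w j)) ∧ ∀ i j, v i = v j ↔ w i = w j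

def level (k : ℕ) : Set M := ⋃ s ∈ {s : List Bool | s.length = k}, X s

variable {X t} {J : Type*} {k k' : ℕ} {C C' : Finset (ℕ → Bool)} {v : J → ℕ → Bool}
  {w : J → M}

lemma Agree.mono (hX : IsBinaryTree X) {α : ℕ → Bool} {m : M} (h : Agree X t k' C' α m)
    (hk : k ≤ k') (hC : C ⊆ C') : Agree X t k C α m :=
  ⟨hX.subset_of_prefix (initSeg_prefix α hk) h.1, fun c hc => h.2 c (hC hc)⟩

lemma Agree.mem_level {α : ℕ → Bool} {m : M} (h : Agree X t k C α m) : m ∈ level X k :=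
  Set.mem_biUnion (length_initSeg α k) h.1

lemma AgreeTuple.mono (hX : IsBinaryTree X) (h : AgreeTuple X t k' C' v w) (hk : k ≤ k')
    (hC : C ⊆ C') : AgreeTuple X t k C v w :=
  ⟨fun j => (h.1 j).mono hX hk hC, h.2⟩

lemma AgreeTuple.comp {J' : Type*} (h : AgreeTuple X t k C v w) (e : J' → J) :
    AgreeTuple X t k C (v ∘ e) (w ∘ e) :=
  ⟨fun j => h.1 (e j), fun i j => h.2 (e i) (e j)⟩

lemma AgreeTuple.sum_elim_const (h : AgreeTuple X t k C v w) {α : ℕ → Bool} {m : M}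
    (hαm : Agree X t k C α m) (hvw : ∀ j, v j = α ↔ w j = m) (ι : Type*) :
    AgreeTuple X t k C (Sum.elim v fun _ : ι => α) (Sum.elim w fun _ => m) := by
  refine ⟨Sum.rec h.1 fun _ => hαm, ?_⟩
  rintro (i | i) (j | j)
  · exact h.2 i j
  · exact hvw i
  · exact eq_comm.trans ((hvw j).trans eq_comm)
  · exact iff_of_true rfl rfl

namespace IsBranchMap

lemma agree_self (ht : IsBranchMap X t) (k : ℕ) (C : Finset (ℕ → Bool)) (α : ℕ → Bool) :
    Agree X t k C α (t α) :=
  ⟨ht.mem_initSeg α k, fun _ _ => ht.injective.eq_iff.symm⟩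

lemma agreeTuple_comp (ht : IsBranchMap X t) (k : ℕ) (C : Finset (ℕ → Bool))
    (v : J → ℕ → Bool) : AgreeTuple X t k C v (t ∘ v) :=
  ⟨fun j => ht.agree_self k C (v j), fun _ _ => ht.injective.eq_iff.symm⟩

lemma exists_agree_of_cantor [Finite J] (ht : IsBranchMap X t)
    (h : AgreeTuple X t k C v w) (α : ℕ → Bool) :
    ∃ m, Agree X t k C α m ∧ ∀ j, v j = α ↔ w j = m := by
  by_cases hv : ∃ j, v j = α
  · obtain ⟨j₀, rfl⟩ := hv
    exact ⟨w j₀, h.1 j₀, fun j => h.2 j j₀⟩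
  by_cases hC : α ∈ C
  · exact ⟨t α, ht.agree_self k C α, fun j => (h.1 j).2 α hC⟩
  obtain ⟨m, hmX, hm⟩ := ((ht.infinite (initSeg α k)).sdiff
    ((Set.finite_range w).union (C.finite_toSet.image t))).nonempty
  simp only [Set.mem_union, Set.mem_range, Set.mem_image, Finset.mem_coe, not_or,
    not_exists, not_and] at hm
  refine ⟨m, ⟨hmX, fun c hc => iff_of_false ?_ (hm.2 c hc ·.symm)⟩,
    fun j => iff_of_false (hv ⟨j, ·⟩) (hm.1 j)⟩
  rintro rfl
  exact hC hc

lemma exists_agree_of_mem_level [Finite J] (ht : IsBranchMap X t)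
    (h : AgreeTuple X t k C v w) {m : M} (hm : m ∈ level X k) :
    ∃ α, Agree X t k C α m ∧ ∀ j, v j = α ↔ w j = m := by
  by_cases hw : ∃ j, w j = m
  · obtain ⟨j₀, rfl⟩ := hw
    exact ⟨v j₀, h.1 j₀, fun j => h.2 j j₀⟩
  by_cases hC : ∃ c ∈ C, t c = m
  · obtain ⟨c, hc, rfl⟩ := hC
    exact ⟨c, ht.agree_self k C c, fun j => (h.1 j).2 c hc⟩
  obtain ⟨s, rfl, hms⟩ := Set.mem_iUnion₂.mp hm
  obtain ⟨α, hαs, hα⟩ := ((infinite_setOf_initSeg_eq s).sdiff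
    (C.finite_toSet.union (Set.finite_range v))).nonempty
  simp only [Set.mem_union, Set.mem_range, Finset.mem_coe, not_or, not_exists] at hα
  simp only [not_exists, not_and] at hw hC
  refine ⟨α, ⟨hαs.symm ▸ hms, fun c hc => iff_of_false ?_ (hC c hc ·.symm)⟩,
    fun j => iff_of_false (hα.2 j) (hw j)⟩
  rintro rfl
  exact hα.1 hc

end IsBranchMap

end Agree

lemma term_eq_var_or_realize_eq_const {γ : Type*}
    (τ : treeLang[[(Set.univ : Set (ℕ → Bool))]].Term γ) :
    (∃ j, τ = Term.var j) ∨ ∃ c : ℕ → Bool, ∀ v, τ.realize v = c := by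
  rcases τ with j | @⟨_ | _, f | c, ts⟩
  · exact Or.inl ⟨j, rfl⟩
  · exact f.elim
  · refine Or.inr ⟨c, fun v => ?_⟩
    erw [Term.realize_func, withConstants_funMap_sumInr]
    rfl
  · exact f.elim
  · exact c.elim

section Translation

variable {M : Type*} (X : List Bool → Set M) (t : (ℕ → Bool) → M)

def Translates {β : Type*} {l : ℕ} (k : ℕ) (C : Finset (ℕ → Bool))
    (ψ : treeLang[[(Set.univ : Set (ℕ → Bool))]].BoundedFormula β l)
    (S : Set (β ⊕ Fin l → M)) : Prop :=
  ∀ (a : β → ℕ → Bool) (xs : Fin l → ℕ → Bool) (w : β ⊕ Fin l → M),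
    AgreeTuple X t k C (Sum.elim a xs) w → (ψ.Realize a xs ↔ w ∈ S)

/-- Moves the last bound variable to a separate `Fin 1` slot, where
`Set.Definable.forall_of_finite` can quantify it. -/
def lastToInr {β : Type*} {l : ℕ} : β ⊕ Fin (l + 1) → (β ⊕ Fin l) ⊕ Fin 1 :=
  Sum.elim (Sum.inl ∘ Sum.inl) (Fin.lastCases (Sum.inr 0) (Sum.inl ∘ Sum.inr))

def forallLevel {β : Type*} {l : ℕ} (k : ℕ) (S : Set (β ⊕ Fin (l + 1) → M)) :
    Set (β ⊕ Fin l → M) :=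
  {w | ∀ u : Fin 1 → M, u 0 ∈ level X k → Sum.elim w u ∘ lastToInr ∈ S}

variable {X t} {β : Type*} {l k : ℕ} {C : Finset (ℕ → Bool)} {L : Language} [L.Structure M]

lemma Translates.mono (hX : IsBinaryTree X)
    {ψ : treeLang[[(Set.univ : Set (ℕ → Bool))]].BoundedFormula β l}
    {S : Set (β ⊕ Fin l → M)} (h : Translates X t k C ψ S) {k' : ℕ}
    {C' : Finset (ℕ → Bool)} (hk : k ≤ k') (hC : C ⊆ C') : Translates X t k' C' ψ S :=
  fun a xs w hw => h a xs w (hw.mono hX hk hC)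

lemma Translates.imp {ψ₁ ψ₂ : treeLang[[(Set.univ : Set (ℕ → Bool))]].BoundedFormula β l}
    {S₁ S₂ : Set (β ⊕ Fin l → M)} (h₁ : Translates X t k C ψ₁ S₁)
    (h₂ : Translates X t k C ψ₂ S₂) : Translates X t k C (ψ₁.imp ψ₂) (S₁ ⇨ S₂) :=
  fun a xs w hw => by
    rw [BoundedFormula.realize_imp, h₁ a xs w hw, h₂ a xs w hw, Set.mem_himp_iff]

lemma exists_translates_equal
    (τ₁ τ₂ : treeLang[[(Set.univ : Set (ℕ → Bool))]].Term (β ⊕ Fin l)) :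
    ∃ C S, (Set.univ : Set M).Definable L S ∧
      Translates X t 0 C (BoundedFormula.equal τ₁ τ₂) S := by
  rcases term_eq_var_or_realize_eq_const τ₁ with ⟨j₁, rfl⟩ | ⟨c₁, hc₁⟩ <;>
    rcases term_eq_var_or_realize_eq_const τ₂ with ⟨j₂, rfl⟩ | ⟨c₂, hc₂⟩
  · exact ⟨∅, {w | w j₁ = w j₂},
      (Set.DefinableFun.proj L).ofPred_eq (Set.DefinableFun.proj L),
      fun a xs w hw => hw.2 j₁ j₂⟩
  · refine ⟨{c₂}, {w | w j₁ = t c₂},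
      (Set.DefinableFun.proj L).ofPred_eq_const (Set.mem_univ _), fun a xs w hw => ?_⟩
    show _ = τ₂.realize _ ↔ _
    rw [hc₂]
    exact (hw.1 j₁).2 c₂ (Finset.mem_singleton_self _)
  · refine ⟨{c₁}, {w | w j₂ = t c₁},
      (Set.DefinableFun.proj L).ofPred_eq_const (Set.mem_univ _), fun a xs w hw => ?_⟩
    show τ₁.realize _ = _ ↔ _
    rw [hc₁, eq_comm]
    exact (hw.1 j₂).2 c₁ (Finset.mem_singleton_self _)
  · refine ⟨∅, {_w | c₁ = c₂}, Set.definable_setOf_const _, fun a xs w _ => ?_⟩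
    show τ₁.realize _ = τ₂.realize _ ↔ _
    rw [hc₁, hc₂]
    rfl

lemma IsBinaryTree.exists_translates_rel (hX : IsBinaryTree X)
    (hdef : ∀ σ, (Set.univ : Set M).Definable₁ L (X σ)) (σ : List Bool)
    (ts : Fin 1 → treeLang[[(Set.univ : Set (ℕ → Bool))]].Term (β ⊕ Fin l)) :
    ∃ k C S, (Set.univ : Set M).Definable L S ∧
      Translates X t k C (BoundedFormula.rel (Sum.inl (treeRel.U σ)) ts) S := by
  rcases term_eq_var_or_realize_eq_const (ts 0) with ⟨j, hj⟩ | ⟨c, hc⟩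
  · refine ⟨σ.length, ∅, {w | w j ∈ X σ}, (hdef σ).preimage_comp fun _ => j,
      fun a xs w hw => ?_⟩
    calc _ ↔ initSeg (Sum.elim a xs j) σ.length = σ := by
          show (∀ i, σ.get i = (ts 0).realize (Sum.elim a xs) i) ↔ _
          rw [hj, initSeg_length_eq_iff]
          rfl
      _ ↔ σ <+: initSeg (Sum.elim a xs j) σ.length := (prefix_initSeg_iff le_rfl).symm
      _ ↔ w j ∈ X σ := (hX.mem_iff_prefix (hw.1 j).1 (by simp)).symm
  · refine ⟨0, ∅, {_w | initSeg c σ.length = σ}, Set.definable_setOf_const _,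
      fun a xs w _ => ?_⟩
    show (∀ i, σ.get i = (ts 0).realize (Sum.elim a xs) i) ↔ _
    rw [hc, initSeg_length_eq_iff]
    rfl

lemma sum_elim_snoc_eq_comp_lastToInr {γ : Type*} (a : β → γ) (xs : Fin l → γ) (x : γ) :
    Sum.elim a (Fin.snoc xs x) = Sum.elim (Sum.elim a xs) (fun _ : Fin 1 => x) ∘ lastToInr := by
  funext j
  rcases j with i | i
  · rfl
  · induction i using Fin.lastCases <;> simp [lastToInr]

lemma definable₁_level (hdef : ∀ σ, (Set.univ : Set M).Definable₁ L (X σ)) (k : ℕ) :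
    (Set.univ : Set M).Definable₁ L (level X k) := by
  rw [Set.Definable₁]
  convert Set.definable_biUnion_finset hdef (List.finite_length_eq Bool k).toFinset using 2
  ext
  simp [level]

lemma definable_forallLevel (hdef : ∀ σ, (Set.univ : Set M).Definable₁ L (X σ))
    {S : Set (β ⊕ Fin (l + 1) → M)} (hS : (Set.univ : Set M).Definable L S) (k : ℕ) :
    (Set.univ : Set M).Definable L (forallLevel X k S) :=
  Set.Definable.forall_of_finite
    (((definable₁_level hdef k).preimage_comp fun _ => Sum.inr 0).himp
      (hS.preimage_comp lastToInr))

lemma IsBranchMap.translates_all [Finite β] (ht : IsBranchMap X t)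
    {ψ : treeLang[[(Set.univ : Set (ℕ → Bool))]].BoundedFormula β (l + 1)}
    {S : Set (β ⊕ Fin (l + 1) → M)} (h : Translates X t k C ψ S) :
    Translates X t k C ψ.all (forallLevel X k S) := by
  intro a xs w hw
  have hsnoc {γ : ℕ → Bool} {m : M} (hγm : Agree X t k C γ m)
      (hcompat : ∀ j, Sum.elim a xs j = γ ↔ w j = m) :
      ψ.Realize a (Fin.snoc xs γ) ↔ Sum.elim w (fun _ : Fin 1 => m) ∘ lastToInr ∈ S := by
    refine h a _ _ ?_
    rw [sum_elim_snoc_eq_comp_lastToInr]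
    exact (hw.sum_elim_const hγm hcompat (Fin 1)).comp lastToInr
  rw [BoundedFormula.realize_all]
  constructor
  · intro hψ u hu
    obtain ⟨γ, hγ, hcompat⟩ := ht.exists_agree_of_mem_level hw hu
    rw [show u = fun _ => u 0 from funext fun i => congrArg u (Subsingleton.elim i 0)]
    exact (hsnoc hγ hcompat).mp (hψ γ)
  · intro hw' γ
    obtain ⟨m, hm, hcompat⟩ := ht.exists_agree_of_cantor hw γ
    exact (hsnoc hm hcompat).mpr (hw' _ hm.mem_level)

lemma IsBranchMap.exists_translates [Finite β] (ht : IsBranchMap X t)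
    (hdef : ∀ σ, (Set.univ : Set M).Definable₁ L (X σ))
    (ψ : treeLang[[(Set.univ : Set (ℕ → Bool))]].BoundedFormula β l) :
    ∃ k C S, (Set.univ : Set M).Definable L S ∧ Translates X t k C ψ S := by
  classical
  induction ψ with
  | falsum => exact ⟨0, ∅, ∅, Set.definable_empty, fun _ _ _ _ => Iff.rfl⟩
  | equal τ₁ τ₂ =>
    obtain ⟨C, S, hS, h⟩ := exists_translates_equal (L := L) (X := X) (t := t) τ₁ τ₂
    exact ⟨0, C, S, hS, h⟩
  | rel R ts =>
    rcases R with R | R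
    · cases R with
      | U σ => exact ht.exists_translates_rel hdef σ ts
    · exact R.elim
  | imp ψ₁ ψ₂ ih₁ ih₂ =>
    obtain ⟨k₁, C₁, S₁, hS₁, h₁⟩ := ih₁
    obtain ⟨k₂, C₂, S₂, hS₂, h₂⟩ := ih₂
    exact ⟨max k₁ k₂, C₁ ∪ C₂, S₁ ⇨ S₂, hS₁.himp hS₂,
      (h₁.mono ht.toIsBinaryTree (le_max_left _ _) Finset.subset_union_left).imp
        (h₂.mono ht.toIsBinaryTree (le_max_right _ _) Finset.subset_union_right)⟩
  | all ψ ih =>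
    obtain ⟨k, C, S, hS, h⟩ := ih
    exact ⟨k, C, _, definable_forallLevel hdef hS k, ht.translates_all h⟩

theorem IsBranchMap.traceDefinesVia (ht : IsBranchMap X t)
    (hdef : ∀ σ, (Set.univ : Set M).Definable₁ L (X σ)) :
    TraceDefinesVia L treeLang M (ℕ → Bool) 1 fun α _ => t α := by
  rintro n _ ⟨ψ, rfl⟩
  obtain ⟨k, C, S, hS, hψ⟩ := ht.exists_translates hdef ψ
  refine ⟨_, hS.preimage_comp (Sum.elim (fun i => (i, 0)) finZeroElim), fun a => ?_⟩
  refine (hψ a _ _ (ht.agreeTuple_comp k C _)).trans (Iff.of_eq (congrArg (· ∈ S) ?_))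
  ext (i | i)
  · rfl
  · exact i.elim0

end Translation

end TraceTree

/-- If `M` is `ℵ₁`-saturated and carries a definable binary tree of nonempty definable sets,
then `M` trace defines the binary tree structure `𝒰` on `{0,1}^ω`. -/
theorem trace_defines_tree_structure
    (L : Language) (M : Type*) [L.Structure M]
    (hsat : Aleph1Saturated L M)
    (X : List Bool → Set M)
    (hdef : ∀ σ : List Bool, Set.Definable₁ (Set.univ : Set M) L (X σ))
    (hne : ∀ σ : List Bool, (X σ).Nonempty)
    (hsub0 : ∀ σ : List Bool, X (σ ++ [false]) ⊆ X σ)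
    (hsub1 : ∀ σ : List Bool, X (σ ++ [true]) ⊆ X σ)
    (hdisj : ∀ σ : List Bool, X (σ ++ [false]) ∩ X (σ ++ [true]) = ∅) :
    ∃ τ : (ℕ → Bool) → Fin 1 → M, Function.Injective τ ∧
      TraceDefinesVia L treeLang M (ℕ → Bool) 1 τ := by
  have hX : TraceTree.IsBinaryTree X :=
    ⟨fun σ b => b.casesOn (hsub0 σ) (hsub1 σ),
      fun σ => Set.disjoint_iff_inter_eq_empty.mpr (hdisj σ)⟩
  obtain ⟨t, ht⟩ := TraceTree.exists_isBranchMap hsat hX hdef hne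
  exact ⟨fun α _ => t α, fun α β h => ht.injective (congrFun h 0), ht.traceDefinesVia hdef⟩
end

section
/- Let M be an L-structure, m ≥ 1, and A ⊆ M^m an infinite set such that for every k ≥ 2 and every k-hypergraph E on A there is a set X ⊆ (M^m)^k definable with parameters in M with: E(a₁,…,a_k) if and only if (a₁,…,a_k) ∈ X, for all a₁,…,a_k ∈ A. Then there is a sequence (c_i)_{i<ω} of elements of M^{2m} such that for every k ≥ 1 and every set S ⊆ ω^k there is a set Y ⊆ (M^{2m})^k definable with parameters in M with: (i₁,…,i_k) ∈ S if and only if (c_{i₁},…,c_{i_k}) ∈ Y, for all i₁,…,i_k < ω. -/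
open FirstOrder FirstOrder.Language

/-- `E` is a `k`-hypergraph on the set `A`: a symmetric `k`-ary relation, supported on tuples
of pairwise distinct elements of `A`. -/
def IsHypergraphOn {V : Type*} (k : ℕ) (A : Set V) (E : (Fin k → V) → Prop) : Prop :=
  (∀ a : Fin k → V, E a → ∀ i : Fin k, a i ∈ A) ∧
  (∀ a : Fin k → V, E a → Function.Injective a) ∧
  (∀ (σ : Equiv.Perm (Fin k)) (a : Fin k → V), E a → E (a ∘ σ))

/-!
Fix distinct `a₀, a₁, … ∈ A` and put `cᵢ = (a₂ᵢ, a₂ᵢ₊₁)`. Any family of `n`-element sets of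
indices (`n ≥ 2`) is, through `a`, a hypergraph on `A`, hence traced by a definable set. The
family of pairs `{2i, 2j + 1}` with `i < j` makes the order of indices definable on the `cᵢ`, and
the families `{2u₀, 2u₀ + 1, …, 2uᵨ₋₁, 2uᵨ₋₁ + 1}` code any set of strictly increasing tuples `u`
(the doubling keeps edges of size at least `2`). Every `g : Fin k → ℕ` factors as `u ∘ h` with
`u` strictly increasing and `h` a surjective rank function fixed by the order pattern of `g`,
which is definable; so `S` is coded by a finite union, over the rank functions `h`, of the sets
coding `{u | u ∘ h ∈ S}`.
-/

open Function Set

section OrderPattern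

variable {ι β γ : Type*}

theorem exists_surjective_fin_lt_iff_lt [Fintype ι] [LinearOrder β] (g : ι → β) :
    ∃ ρ ≤ Fintype.card ι, ∃ h : ι → Fin ρ, Surjective h ∧ ∀ i j, h i < h j ↔ g i < g j := by
  classical
  let T := Finset.univ.image g
  let e := T.orderIsoOfFin rfl
  refine ⟨T.card, Finset.card_image_le, fun i => e.symm ⟨g i, Finset.mem_image_of_mem g (by simp)⟩,
    fun t => ?_, fun i j => by simp⟩
  obtain ⟨i, -, hi⟩ := Finset.mem_image.1 (e t).2
  exact ⟨i, by simp [hi]⟩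

variable [Preorder γ] {h : ι → γ} (hh : Surjective h) {g : ι → β}

theorem strictMono_comp_surjInv [Preorder β] (hg : ∀ i j, h i < h j ↔ g i < g j) :
    StrictMono (g ∘ surjInv hh) := fun t t' htt' =>
  (hg _ _).1 (by rwa [surjInv_eq hh, surjInv_eq hh])

theorem comp_surjInv_comp [LinearOrder β] (hg : ∀ i j, h i < h j ↔ g i < g j) :
    (g ∘ surjInv hh) ∘ h = g := by
  funext i
  have hi : h (surjInv hh (h i)) = h i := surjInv_eq hh (h i)
  have hle := (hg i (surjInv hh (h i))).not
  have hge := (hg (surjInv hh (h i)) i).not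
  rw [hi] at hle hge
  exact le_antisymm (not_lt.1 (hle.1 (lt_irrefl _))) (not_lt.1 (hge.1 (lt_irrefl _)))

end OrderPattern

section

variable {M : Type*} {ι γ β δ : Type*}

def orderPatternSet [LT γ] (Z : Set (Fin 2 × β → M)) (h : ι → γ) : Set (ι × β → M) :=
  ⋂ i, ⋂ j, {y | h i < h j ↔ y ∘ Prod.map ![i, j] id ∈ Z}

theorem definable_orderPatternSet {L : Language} [L.Structure M] [Finite ι] [LT γ]
    {Z : Set (Fin 2 × β → M)} (hZ : (univ : Set M).Definable L Z) (h : ι → γ) :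
    (univ : Set M).Definable L (orderPatternSet Z h) :=
  definable_iInter_of_finite fun i => definable_iInter_of_finite fun j => by
    by_cases hij : h i < h j
    · simp only [hij, true_iff]
      exact hZ.preimage_comp _
    · simp only [hij, false_iff]
      exact (hZ.preimage_comp _).compl

theorem mem_orderPatternSet_iff [LT γ] [LT δ] {c : δ → β → M} {Z : Set (Fin 2 × β → M)}
    (hZ : ∀ w : Fin 2 → δ, uncurry (c ∘ w) ∈ Z ↔ w 0 < w 1) (h : ι → γ) (g : ι → δ) :
    uncurry (c ∘ g) ∈ orderPatternSet Z h ↔ ∀ i j, h i < h j ↔ g i < g j := by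
  simp only [orderPatternSet, mem_iInter, mem_ofPred_eq]
  exact forall₂_congr fun i j => iff_congr Iff.rfl (hZ (g ∘ ![i, j]))

end

section

variable (L : Language) {M : Type*} [L.Structure M] {α : Type*}

def HypergraphsCoded (A : Set (α → M)) : Prop :=
  ∀ k : ℕ, 2 ≤ k → ∀ E : (Fin k → α → M) → Prop, IsHypergraphOn k A E →
    ∃ X : Set (Fin k × α → M), (univ : Set M).Definable L X ∧
      ∀ a : Fin k → α → M, (∀ i, a i ∈ A) → (E a ↔ uncurry a ∈ X)

def pairSeq (a : ℕ → α → M) : ℕ → Fin 2 × α → M :=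
  fun i p => a (2 * i + p.1) p.2

variable {L} {A : Set (α → M)}

theorem HypergraphsCoded.exists_definable_range_mem (hA : HypergraphsCoded L A) {ι : Type*}
    {a : ι → α → M} (ha : Injective a) (haA : ∀ i, a i ∈ A) {κ : Type*} [Finite κ]
    (hκ : 2 ≤ Nat.card κ) (R : Set (Set ι)) :
    ∃ X : Set (κ × α → M), (univ : Set M).Definable L X ∧
      ∀ v : κ → ι, uncurry (a ∘ v) ∈ X ↔ Injective v ∧ range v ∈ R := by
  let e := Finite.equivFin κ
  let E : (Fin (Nat.card κ) → α → M) → Prop := fun b =>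
    ∃ v : Fin (Nat.card κ) → ι, Injective v ∧ range v ∈ R ∧ a ∘ v = b
  have hE : IsHypergraphOn (Nat.card κ) A E := by
    refine ⟨?_, ?_, ?_⟩
    · rintro _ ⟨v, -, -, rfl⟩ i
      exact haA (v i)
    · rintro _ ⟨v, hv, -, rfl⟩
      exact ha.comp hv
    · rintro σ _ ⟨v, hv, hvR, rfl⟩
      exact ⟨v ∘ σ, hv.comp σ.injective, by rwa [σ.surjective.range_comp], rfl⟩
  obtain ⟨X, hXdef, hX⟩ := hA _ hκ E hE
  refine ⟨(· ∘ Prod.map e.symm id) ⁻¹' X, hXdef.preimage_comp _, fun v => ?_⟩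
  have hEv : E (a ∘ v ∘ e.symm) ↔ Injective (v ∘ e.symm) ∧ range (v ∘ e.symm) ∈ R :=
    ⟨fun ⟨w, hw, hwR, hvw⟩ => ha.comp_left hvw ▸ ⟨hw, hwR⟩, fun h => ⟨_, h.1, h.2, rfl⟩⟩
  rw [e.symm.injective_comp, e.symm.surjective.range_comp,
    hX (a ∘ v ∘ e.symm) fun _ => haA _] at hEv
  exact hEv

theorem HypergraphsCoded.exists_definable_lt (hA : HypergraphsCoded L A) {a : ℕ → α → M}
    (ha : Injective a) (haA : ∀ i, a i ∈ A) :
    ∃ Z : Set (Fin 2 × (Fin 2 × α) → M), (univ : Set M).Definable L Z ∧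
      ∀ w : Fin 2 → ℕ, uncurry (pairSeq a ∘ w) ∈ Z ↔ w 0 < w 1 := by
  obtain ⟨X, hXdef, hX⟩ := hA.exists_definable_range_mem ha haA (κ := Fin 2) (by simp)
    {T | ∃ i j, i < j ∧ T = {2 * i, 2 * j + 1}}
  refine ⟨(· ∘ fun p => (p.1, p.1, p.2)) ⁻¹' X, hXdef.preimage_comp _, fun w => ?_⟩
  have hrange : range (fun z : Fin 2 => 2 * w z + z) = {2 * w 0, 2 * w 1 + 1} := by
    ext n
    simp [Fin.exists_fin_two, eq_comm]
  have hinj : Injective fun z : Fin 2 => 2 * w z + z :=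
    fun z z' (h : 2 * w z + z = 2 * w z' + z') => by
      ext
      omega
  change uncurry (a ∘ fun z : Fin 2 => 2 * w z + z) ∈ X ↔ _
  rw [hX, hrange, and_iff_right hinj]
  constructor
  · rintro ⟨i, j, hij, hT⟩
    have h0 : 2 * w 0 ∈ ({2 * i, 2 * j + 1} : Set ℕ) := hT ▸ by simp
    have h1 : 2 * w 1 + 1 ∈ ({2 * i, 2 * j + 1} : Set ℕ) := hT ▸ by simp
    simp only [mem_insert_iff, mem_singleton_iff] at h0 h1
    omega
  · exact fun hlt => ⟨w 0, w 1, hlt, rfl⟩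

theorem HypergraphsCoded.exists_definable_pairSeq_range_mem (hA : HypergraphsCoded L A)
    {a : ℕ → α → M} (ha : Injective a) (haA : ∀ i, a i ∈ A) {κ : Type*} [Finite κ] [Nonempty κ]
    (R : Set (Set ℕ)) :
    ∃ Z : Set (κ × (Fin 2 × α) → M), (univ : Set M).Definable L Z ∧
      ∀ u : κ → ℕ, uncurry (pairSeq a ∘ u) ∈ Z ↔ Injective u ∧ range u ∈ R := by
  have hcard : 2 ≤ Nat.card (κ × Fin 2) := by
    rw [Nat.card_prod, Nat.card_eq_fintype_card (α := Fin 2), Fintype.card_fin]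
    have : 0 < Nat.card κ := Nat.card_pos
    omega
  obtain ⟨X, hXdef, hX⟩ := hA.exists_definable_range_mem ha haA hcard {T | (2 * ·) ⁻¹' T ∈ R}
  refine ⟨(· ∘ Equiv.prodAssoc κ (Fin 2) α) ⁻¹' X, hXdef.preimage_comp _, fun u => ?_⟩
  let v : κ × Fin 2 → ℕ := fun p => 2 * u p.1 + p.2
  have hinj : Injective v ↔ Injective u := by
    refine ⟨fun hv t t' h => congrArg Prod.fst (@hv (t, 0) (t', 0) (by simp [v, h])), ?_⟩
    rintro hu ⟨t, b⟩ ⟨t', b'⟩ (h : 2 * u t + b = 2 * u t' + b')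
    have hb : b = b' := by ext; omega
    subst hb
    simp [hu (by omega : u t = u t')]
  have hrange : (2 * ·) ⁻¹' range v = range u := by
    ext x
    simp only [mem_preimage, mem_range, Prod.exists, v]
    constructor
    · rintro ⟨t, b, h⟩
      exact ⟨t, by omega⟩
    · rintro ⟨t, rfl⟩
      exact ⟨t, 0, by simp⟩
  change uncurry (a ∘ v) ∈ X ↔ _
  rw [hX, hinj, mem_ofPred_eq, hrange]

theorem HypergraphsCoded.exists_definable_strictMono (hA : HypergraphsCoded L A)
    {a : ℕ → α → M} (ha : Injective a) (haA : ∀ i, a i ∈ A) {κ : Type*} [Finite κ] [Nonempty κ]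
    [LinearOrder κ] (W : Set (κ → ℕ)) :
    ∃ Z : Set (κ × (Fin 2 × α) → M), (univ : Set M).Definable L Z ∧
      ∀ u : κ → ℕ, StrictMono u → (uncurry (pairSeq a ∘ u) ∈ Z ↔ u ∈ W) := by
  obtain ⟨Z, hZdef, hZ⟩ := hA.exists_definable_pairSeq_range_mem ha haA (κ := κ)
    {T | ∃ w ∈ W, StrictMono w ∧ range w = T}
  refine ⟨Z, hZdef, fun u hu => ?_⟩
  rw [hZ, and_iff_right hu.injective]
  constructor
  · rintro ⟨w, hw, hwm, hwu⟩
    rwa [← (hwm.range_inj hu).1 hwu]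
  · exact fun huW => ⟨u, huW, hu, rfl⟩

end

/-- If every hypergraph on an infinite set `A ⊆ M^m` is traced by a definable set, then there is
a sequence `(c_i)` of elements of `M^{2m}` such that every subset of `ω^k` is traced on it by a
definable set. -/
theorem arbitrary_sets_coded_of_hypergraphs_coded
    (L : Language) (M : Type*) [L.Structure M] (m : ℕ)
    (A : Set (Fin m → M)) (hA : A.Infinite)
    (hcode : ∀ (k : ℕ), 2 ≤ k → ∀ E : (Fin k → Fin m → M) → Prop, IsHypergraphOn k A E →
      ∃ X : Set (Fin k × Fin m → M), Set.Definable (Set.univ : Set M) L X ∧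
        ∀ a : Fin k → Fin m → M, (∀ i, a i ∈ A) →
          (E a ↔ (fun p : Fin k × Fin m => a p.1 p.2) ∈ X)) :
    ∃ c : ℕ → Fin 2 × Fin m → M,
      ∀ (k : ℕ), 1 ≤ k → ∀ S : Set (Fin k → ℕ),
        ∃ Y : Set (Fin k × (Fin 2 × Fin m) → M), Set.Definable (Set.univ : Set M) L Y ∧
          ∀ g : Fin k → ℕ, g ∈ S ↔ (fun p : Fin k × (Fin 2 × Fin m) => c (g p.1) p.2) ∈ Y := by
  have hcoded : HypergraphsCoded L A := hcode
  obtain ⟨a, ha, haA⟩ : ∃ a : ℕ → Fin m → M, Injective a ∧ ∀ n, a n ∈ A :=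
    ⟨(↑) ∘ hA.natEmbedding A, Subtype.val_injective.comp (hA.natEmbedding A).injective,
      fun n => (hA.natEmbedding A n).2⟩
  obtain ⟨Z, hZdef, hZ⟩ := hcoded.exists_definable_lt ha haA
  refine ⟨pairSeq a, fun k hk S => ?_⟩
  have hQ (ρ : Fin (k + 1)) (h : Fin k → Fin ρ) :=
    haveI : Nonempty (Fin ρ) := ⟨h ⟨0, hk⟩⟩
    hcoded.exists_definable_strictMono ha haA {u | u ∘ h ∈ S}
  choose Q hQdef hQ using hQ
  refine ⟨⋃ (ρ : Fin (k + 1)) (h : {h : Fin k → Fin ρ // Surjective h}),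
    orderPatternSet Z h.1 ∩ (· ∘ Prod.map (surjInv h.2) id) ⁻¹' Q ρ h, ?_, fun g => ?_⟩
  · exact definable_iUnion_of_finite fun ρ => definable_iUnion_of_finite fun h =>
      (definable_orderPatternSet hZdef h.1).inter ((hQdef ρ h).preimage_comp _)
  change g ∈ S ↔ uncurry (pairSeq a ∘ g) ∈ _
  simp only [mem_iUnion, mem_inter_iff, mem_orderPatternSet_iff hZ, mem_preimage]
  constructor
  · intro hg
    obtain ⟨ρ, hρ, h, hh, hgh⟩ := exists_surjective_fin_lt_iff_lt g
    refine ⟨⟨ρ, by simpa [Nat.lt_succ_iff] using hρ⟩, ⟨h, hh⟩, hgh, ?_⟩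
    change uncurry (pairSeq a ∘ (g ∘ surjInv hh)) ∈ _
    rwa [hQ _ _ _ (strictMono_comp_surjInv hh hgh), mem_ofPred_eq, comp_surjInv_comp hh hgh]
  · rintro ⟨ρ, ⟨h, hh⟩, hgh, hgQ⟩
    have := (hQ _ _ _ (strictMono_comp_surjInv hh hgh)).1 hgQ
    rwa [mem_ofPred_eq, comp_surjInv_comp hh hgh] at this
end

section
/- Let B be a Boolean algebra and A ⊆ B an independent subset. Suppose β₁,…,β_k ∈ A are pairwise distinct and, for each i ∈ {1,…,n}, α^i_1,…,α^i_k ∈ A are pairwise distinct with {α^i_1,…,α^i_k} ≠ {β₁,…,β_k}. Then β₁ ⊓ ⋯ ⊓ β_k is not less than or equal to the join ⋁_{i=1}^{n} (α^i_1 ⊓ ⋯ ⊓ α^i_k). -/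
/-- A subset `A` of a Boolean algebra is independent if for any disjoint finite sets
`s, t ⊆ A`, the meet of the elements of `s` together with the complements of the elements
of `t` is nonzero. -/
def BoolIndependent {B : Type*} [BooleanAlgebra B] (A : Set B) : Prop :=
  ∀ s t : Finset B, ↑s ⊆ A → ↑t ⊆ A → Disjoint s t → s.inf id ⊓ t.inf compl ≠ ⊥

/-- If `A` is an independent subset of a Boolean algebra, `β₁, …, β_k ∈ A` are pairwise
distinct, and for each `i` the elements `αⁱ₁, …, αⁱ_k ∈ A` are pairwise distinct with
`{αⁱ₁, …, αⁱ_k} ≠ {β₁, …, β_k}`, then `β₁ ⊓ ⋯ ⊓ β_k ≰ ⋁ᵢ (αⁱ₁ ⊓ ⋯ ⊓ αⁱ_k)`. -/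
theorem boolean_independent_meet_not_le
    {B : Type*} [BooleanAlgebra B] (A : Set B) (hA : BoolIndependent A)
    (k n : ℕ) (β : Fin k → B) (hβA : ∀ j, β j ∈ A) (hβinj : Function.Injective β)
    (α : Fin n → Fin k → B) (hαA : ∀ i j, α i j ∈ A) (hαinj : ∀ i, Function.Injective (α i))
    (hne : ∀ i, Set.range (α i) ≠ Set.range β) :
    ¬ (Finset.univ.inf β ≤ Finset.univ.sup fun i => Finset.univ.inf (α i)) := by
  intro hle
  have hex : ∀ i, ∃ j, α i j ∉ Set.range β := by
    intro i
    by_contra h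
    push_neg at h
    apply hne i
    have hsub : Set.range (α i) ⊆ Set.range β := by
      rintro x ⟨j, rfl⟩; exact h j
    refine Set.eq_of_subset_of_ncard_le hsub ?_ (Set.finite_range β)
    rw [← Set.image_univ, ← Set.image_univ, Set.ncard_image_of_injective _ (hαinj i),
      Set.ncard_image_of_injective _ hβinj]
  choose j hj using hex
  classical
  set γ : Fin n → B := fun i => α i (j i) with hγ
  set s : Finset B := Finset.image β Finset.univ with hs
  set t : Finset B := Finset.image γ Finset.univ with ht
  have hst : Disjoint s t := by
    rw [Finset.disjoint_left]
    intro a ha hat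
    simp only [hs, ht, Finset.mem_image, Finset.mem_univ, true_and] at ha hat
    obtain ⟨j', rfl⟩ := ha
    obtain ⟨i, hi⟩ := hat
    exact hj i ⟨j', hi.symm⟩
  have hsinf : s.inf id = Finset.univ.inf β := by
    rw [hs, Finset.inf_image]; rfl
  have htinf : t.inf compl = Finset.univ.inf fun i => (γ i)ᶜ := by
    rw [ht, Finset.inf_image]; rfl
  have hx := hA s t ?_ ?_ hst
  · apply hx
    rw [hsinf, htinf]
    have h1 : Finset.univ.inf β ⊓ (Finset.univ.inf fun i => (γ i)ᶜ) ≤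
        (Finset.univ.sup fun i => Finset.univ.inf (α i)) ⊓
          (Finset.univ.inf fun i => (γ i)ᶜ) :=
      inf_le_inf_right _ hle
    refine le_bot_iff.mp (h1.trans ?_)
    rw [Finset.sup_inf_distrib_right]
    apply Finset.sup_le
    intro i _
    have h2 : Finset.univ.inf (α i) ≤ γ i := Finset.inf_le (Finset.mem_univ (j i))
    have h3 : (Finset.univ.inf fun i => (γ i)ᶜ) ≤ (γ i)ᶜ :=
      Finset.inf_le (Finset.mem_univ i)
    calc Finset.univ.inf (α i) ⊓ (Finset.univ.inf fun i => (γ i)ᶜ)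
        ≤ γ i ⊓ (γ i)ᶜ := inf_le_inf h2 h3
      _ = ⊥ := inf_compl_eq_bot
  · intro x hx'
    simp only [hs, Finset.coe_image, Finset.coe_univ, Set.image_univ] at hx'
    obtain ⟨j', rfl⟩ := hx'
    exact hβA j'
  · intro x hx'
    simp only [ht, Finset.coe_image, Finset.coe_univ, Set.image_univ] at hx'
    obtain ⟨i, rfl⟩ := hx'
    exact hαA i (j i)
end

section
/- Fix k ≥ 2. Let X be a set and S an arbitrary k-ary relation on X. Then there exist a k-hypergraph F on Y := X × {1,…,k} and an injection e : X → Y^k such that for all x₁,…,x_k ∈ X: S(x₁,…,x_k) holds if and only if F(e(x₁)₁, e(x₂)₂, …, e(x_k)_k) holds, where e(x)_j denotes the j-th coordinate of e(x). -/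
/-- For `k ≥ 2`, any `k`-ary relation `S` on a set `X` can be coded by a `k`-hypergraph `F` on
`Y = X × {1,…,k}`: there is an injection `e : X → Y^k` with
`S(x₁,…,x_k) ↔ F(e(x₁)₁, e(x₂)₂, …, e(x_k)_k)`. -/
theorem relation_coded_by_hypergraph
    (k : ℕ) (hk : 2 ≤ k) (X : Type*) (S : (Fin k → X) → Prop) :
    ∃ (F : (Fin k → X × Fin k) → Prop) (e : X → Fin k → X × Fin k),
      -- `F` is symmetric
      (∀ (σ : Equiv.Perm (Fin k)) (a : Fin k → X × Fin k), F a → F (a ∘ σ)) ∧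
      -- `F` holds only on tuples of pairwise distinct elements
      (∀ a : Fin k → X × Fin k, F a → Function.Injective a) ∧
      -- `e` is injective
      Function.Injective e ∧
      -- `F` codes `S` along `e`
      (∀ x : Fin k → X, S x ↔ F (fun j : Fin k => e (x j) j)) := by
  refine ⟨fun a => ∃ (σ : Equiv.Perm (Fin k)) (x : Fin k → X), S x ∧
      a = (fun j => (x j, j)) ∘ σ, fun x j => (x, j), ?_, ?_, ?_, ?_⟩
  · rintro τ a ⟨σ, x, hS, rfl⟩
    exact ⟨τ.trans σ, x, hS, rfl⟩
  · rintro a ⟨σ, x, hS, rfl⟩ i j hij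
    have : σ i = σ j := congrArg Prod.snd hij
    exact σ.injective this
  · intro x y h
    have : (x, (⟨0, by omega⟩ : Fin k)) = (y, ⟨0, by omega⟩) := congrFun h _
    exact (Prod.mk.injEq ..).mp this |>.1
  · intro x
    constructor
    · intro hS
      exact ⟨Equiv.refl _, x, hS, rfl⟩
    · rintro ⟨σ, y, hS, h⟩
      have hσ : ∀ j, σ j = j := fun j => (congrArg Prod.snd (congrFun h j)).symm
      have hx : ∀ j, x j = y j := by
        intro j
        have := congrArg Prod.fst (congrFun h j)
        simpa [hσ j] using this
      have : x = y := funext hx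
      rwa [this]
end

section
/- Let K be a field of characteristic zero, and identify each positive integer with its image in K. For n ≥ 1 let P = {(x, y) ∈ K² : x ∈ {1,…,n}, y ∈ {1,…,2n²}} and let L be the family of lines ℓ_{s,t} = {(x, s·x + t) : x ∈ K} for s ∈ {1,…,n} and t ∈ {1,…,n²}. Then |P| = 2n³, |L| = n³ (the lines ℓ_{s,t} are pairwise distinct), the number of incidences |{(p, ℓ) ∈ P × L : p ∈ ℓ}| equals n⁴, and the incidence bipartite graph between P and L is K_{2,2}-free, i.e., no two distinct points of P lie on two distinct lines of L. (Hence the point–line incidence graph over a field of characteristic zero does not have near linear Zarankiewicz bounds.) -/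
/-- The grid of points `{1,…,n} × {1,…,2n²}` inside `K²`. -/
def incPoints (K : Type*) [Field K] (n : ℕ) : Set (K × K) :=
  {p | ∃ i j : ℕ, 1 ≤ i ∧ i ≤ n ∧ 1 ≤ j ∧ j ≤ 2 * n ^ 2 ∧ p = ((i : K), (j : K))}

/-- The line `y = s·x + t` in `K²`. -/
def incLine (K : Type*) [Field K] (s t : ℕ) : Set (K × K) :=
  {p | p.2 = (s : K) * p.1 + (t : K)}

/-- The family of lines `y = s·x + t` for `s ∈ {1,…,n}`, `t ∈ {1,…,n²}`. -/
def incLines (K : Type*) [Field K] (n : ℕ) : Set (Set (K × K)) :=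
  {l | ∃ s t : ℕ, 1 ≤ s ∧ s ≤ n ∧ 1 ≤ t ∧ t ≤ n ^ 2 ∧ l = incLine K s t}

lemma incLine_inj (K : Type*) [Field K] [CharZero K] {s t s' t' : ℕ}
    (h : incLine K s t = incLine K s' t') : s = s' ∧ t = t' := by
  have h1 : ((0 : K), (t : K)) ∈ incLine K s t := by simp [incLine]
  rw [h] at h1
  simp [incLine] at h1
  have h2 : ((1 : K), (s : K) + (t : K)) ∈ incLine K s t := by simp [incLine]
  rw [h] at h2
  simp [incLine, h1] at h2
  exact ⟨h2, h1⟩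

/-- Over a field of characteristic zero: the standard point–line configuration witnessing the
failure of near linear Zarankiewicz bounds.  There are `2n³` points, `n³` pairwise distinct
lines, exactly `n⁴` incidences, and the incidence bipartite graph is `K₂,₂`-free. -/
theorem point_line_incidence_configuration
    (K : Type*) [Field K] [CharZero K] (n : ℕ) (hn : 1 ≤ n) :
    (incPoints K n).ncard = 2 * n ^ 3 ∧
    (∀ s t s' t' : ℕ, 1 ≤ s → s ≤ n → 1 ≤ t → t ≤ n ^ 2 → 1 ≤ s' → s' ≤ n → 1 ≤ t' →
      t' ≤ n ^ 2 → incLine K s t = incLine K s' t' → s = s' ∧ t = t') ∧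
    (incLines K n).ncard = n ^ 3 ∧
    {q : (K × K) × Set (K × K) | q.1 ∈ incPoints K n ∧ q.2 ∈ incLines K n ∧ q.1 ∈ q.2}.ncard
      = n ^ 4 ∧
    (∀ p p' : K × K, ∀ l l' : Set (K × K), p ∈ incPoints K n → p' ∈ incPoints K n →
      l ∈ incLines K n → l' ∈ incLines K n → p ≠ p' → l ≠ l' →
      ¬(p ∈ l ∧ p ∈ l' ∧ p' ∈ l ∧ p' ∈ l')) := by
  classical
  refine ⟨?_, ?_, ?_, ?_, ?_⟩
  · -- points count
    have hset : incPoints K n =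
        ↑((Finset.Icc 1 n ×ˢ Finset.Icc 1 (2 * n ^ 2)).image
          (fun ij : ℕ × ℕ => ((ij.1 : K), (ij.2 : K)))) := by
      ext p
      simp only [incPoints, Set.mem_setOf_eq, Finset.coe_image, Set.mem_image,
        Finset.mem_coe, Finset.mem_product, Finset.mem_Icc]
      constructor
      · rintro ⟨i, j, h1, h2, h3, h4, rfl⟩
        exact ⟨(i, j), ⟨⟨h1, h2⟩, ⟨h3, h4⟩⟩, rfl⟩
      · rintro ⟨⟨i, j⟩, ⟨⟨h1, h2⟩, ⟨h3, h4⟩⟩, rfl⟩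
        exact ⟨i, j, h1, h2, h3, h4, rfl⟩
    rw [hset, Set.ncard_coe_finset, Finset.card_image_of_injOn, Finset.card_product]
    · simp only [Nat.card_Icc, Nat.add_sub_cancel]; ring
    · intro a _ b _ hab
      simp only [Prod.ext_iff, Nat.cast_inj] at hab
      exact Prod.ext hab.1 hab.2
  · intro s t s' t' _ _ _ _ _ _ _ _ h
    exact incLine_inj K h
  · -- lines count
    have hset : incLines K n =
        ↑((Finset.Icc 1 n ×ˢ Finset.Icc 1 (n ^ 2)).image
          (fun st : ℕ × ℕ => incLine K st.1 st.2)) := by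
      ext l
      simp only [incLines, Set.mem_setOf_eq, Finset.coe_image, Set.mem_image,
        Finset.mem_coe, Finset.mem_product, Finset.mem_Icc]
      constructor
      · rintro ⟨s, t, h1, h2, h3, h4, rfl⟩
        exact ⟨(s, t), ⟨⟨h1, h2⟩, ⟨h3, h4⟩⟩, rfl⟩
      · rintro ⟨⟨s, t⟩, ⟨⟨h1, h2⟩, ⟨h3, h4⟩⟩, rfl⟩
        exact ⟨s, t, h1, h2, h3, h4, rfl⟩
    rw [hset, Set.ncard_coe_finset, Finset.card_image_of_injOn, Finset.card_product]
    · simp only [Nat.card_Icc, Nat.add_sub_cancel]; ring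
    · intro a _ b _ hab
      obtain ⟨h1, h2⟩ := incLine_inj K hab
      exact Prod.ext h1 h2
  · -- incidences count
    have hset : {q : (K × K) × Set (K × K) |
        q.1 ∈ incPoints K n ∧ q.2 ∈ incLines K n ∧ q.1 ∈ q.2} =
        ↑((Finset.Icc 1 n ×ˢ Finset.Icc 1 n ×ˢ Finset.Icc 1 (n ^ 2)).image
          (fun ist : ℕ × ℕ × ℕ =>
            (((ist.1 : K), (ist.2.1 : K) * (ist.1 : K) + (ist.2.2 : K)),
              incLine K ist.2.1 ist.2.2))) := by
      ext ⟨⟨x, y⟩, L⟩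
      simp only [Set.mem_setOf_eq, Finset.coe_image, Set.mem_image,
        Finset.mem_coe, Finset.mem_product, Finset.mem_Icc]
      constructor
      · rintro ⟨⟨i, j, hi1, hi2, hj1, hj2, hp⟩, ⟨s, t, hs1, hs2, ht1, ht2, rfl⟩, hmem⟩
        rw [Prod.mk.injEq] at hp
        obtain ⟨rfl, rfl⟩ := hp
        simp only [incLine, Set.mem_setOf_eq] at hmem
        exact ⟨(i, s, t), ⟨⟨hi1, hi2⟩, ⟨hs1, hs2⟩, ⟨ht1, ht2⟩⟩, by simp [hmem]⟩
      · rintro ⟨⟨i, s, t⟩, ⟨⟨hi1, hi2⟩, ⟨hs1, hs2⟩, ⟨ht1, ht2⟩⟩, heq⟩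
        dsimp only at hi1 hi2 hs1 hs2 ht1 ht2 heq
        simp only [Prod.mk.injEq] at heq
        obtain ⟨⟨rfl, rfl⟩, rfl⟩ := heq
        refine ⟨⟨i, s * i + t, hi1, hi2, ?_, ?_, by push_cast; ring_nf⟩,
          ⟨s, t, hs1, hs2, ht1, ht2, rfl⟩, ?_⟩
        · omega
        · have h1 : s * i ≤ n * n := Nat.mul_le_mul hs2 hi2
          have h2 : n * n = n ^ 2 := by ring
          omega
        · simp [incLine]
    rw [hset, Set.ncard_coe_finset, Finset.card_image_of_injOn, Finset.card_product,
      Finset.card_product]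
    · simp only [Nat.card_Icc, Nat.add_sub_cancel]; ring
    · intro a _ b _ hab
      simp only [Prod.ext_iff] at hab
      obtain ⟨⟨h1, _⟩, hl⟩ := hab
      obtain ⟨hs, ht⟩ := incLine_inj K hl
      have hi : a.1 = b.1 := Nat.cast_inj.mp h1
      exact Prod.ext hi (Prod.ext hs ht)
  · -- K22 free
    rintro p p' l l' _ _ ⟨s, t, _, _, _, _, rfl⟩ ⟨s', t', _, _, _, _, rfl⟩ hpp hll
      ⟨h1, h2, h3, h4⟩
    simp only [incLine, Set.mem_setOf_eq] at h1 h2 h3 h4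
    by_cases hs : (s : K) = (s' : K)
    · apply hll
      have ht : (t : K) = (t' : K) := by
        have := h1.symm.trans h2
        rw [hs] at this
        exact add_left_cancel this
      unfold incLine
      rw [hs, ht]
    · apply hpp
      have hx : p.1 = p'.1 := by
        have e1 : ((s : K) - s') * p.1 = (t' : K) - t := by
          have := h1.symm.trans h2; ring_nf; linear_combination this
        have e2 : ((s : K) - s') * p'.1 = (t' : K) - t := by
          have := h3.symm.trans h4; ring_nf; linear_combination this
        have hne : (s : K) - s' ≠ 0 := sub_ne_zero.mpr hs
        field_simp at e1 e2
        exact mul_left_cancel₀ hne (e1.trans e2.symm)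
      have hy : p.2 = p'.2 := by rw [h1, h3, hx]
      exact Prod.ext hx hy
end

section
/- Fix a prime p, let K be a finite field extension of ℚ_p (a field equipped with a ℚ_p-algebra structure making it finite dimensional over ℚ_p), and fix n ≥ 1. Then there exists m ≥ 1 such that for every α ∈ ℚ_p: if the image of α in K is an m-th power in K, then α is an n-th power in ℚ_p. -/
/-!
If `γ ^ m = α` in `K` with `m = n * d * w`, where `d = [K : ℚ_p]` and `w` kills every root of
unity of `K`, then `γ ^ d` and `N_{K/ℚ_p}(γ)` have the same `m`-th power `α ^ d`, so their
quotient is a root of unity; hence `γ ^ (d * w) = N(γ) ^ w` and `α = (N(γ) ^ w) ^ n`.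

Such a `w` exists because `K` has only finitely many roots of unity: they lie in the integral
closure `O` of `ℤ_p`, a finite `ℤ_p`-module, and inject into the finite quotient `O / p²O`,
since `1 + p²O` contains no nontrivial root of unity: `(1 + a) ^ ℓ = 1` with `a ∈ p²O \ {0}`
forces `ℓ ∈ aO ⊆ p²O`, impossible for a prime `ℓ`.
-/

theorem exists_one_add_pow_eq {A σ : Type*} [CommSemiring A] [SetLike σ A]
    [SubsemiringClass σ A] {O : σ} {a : A} (ha : a ∈ O) (ℓ : ℕ) :
    ∃ s ∈ O, (1 + a) ^ ℓ = 1 + ℓ * a + a ^ 2 * s := by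
  induction ℓ with
  | zero => exact ⟨0, zero_mem O, by simp⟩
  | succ ℓ ih =>
    obtain ⟨s, hs, h⟩ := ih
    refine ⟨ℓ + s + a * s, add_mem (add_mem (natCast_mem O ℓ) hs) (mul_mem ha hs), ?_⟩
    rw [pow_succ, h]
    push_cast
    ring

theorem exists_pow_eq_one_of_isOfFinOrder {M : Type*} [Monoid M]
    (h : {x : M | IsOfFinOrder x}.Finite) :
    ∃ w, 0 < w ∧ ∀ x : M, IsOfFinOrder x → x ^ w = 1 := by
  refine ⟨h.toFinset.lcm orderOf, ?_, fun x hx => ?_⟩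
  · simp [Nat.pos_iff_ne_zero, Finset.lcm_eq_zero_iff]
  · exact orderOf_dvd_iff_pow_eq_one.mp (Finset.dvd_lcm (h.mem_toFinset.mpr hx))

theorem pow_eq_pow_of_pow_eq_pow {F : Type*} [Field F] {w M : ℕ}
    (hw : ∀ x : F, IsOfFinOrder x → x ^ w = 1) (hM : M ≠ 0) {a b : F} (h : a ^ M = b ^ M) :
    a ^ w = b ^ w := by
  rcases eq_or_ne b 0 with rfl | hb
  · rw [pow_eq_zero_iff hM |>.mp (h.trans (zero_pow hM))]
  have hab : (a / b) ^ M = 1 := by rw [div_pow, h, div_self (pow_ne_zero M hb)]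
  have := hw _ (isOfFinOrder_iff_pow_eq_one.mpr ⟨M, Nat.pos_of_ne_zero hM, hab⟩)
  rwa [div_pow, div_eq_one_iff_eq (pow_ne_zero w hb)] at this

theorem norm_pow_pow_eq_of_pow_eq_algebraMap {F K : Type*} [Field F] [Field K] [Algebra F K]
    [FiniteDimensional F K] {w n : ℕ} (hw : ∀ x : K, IsOfFinOrder x → x ^ w = 1)
    (hw0 : w ≠ 0) (hn : n ≠ 0) {γ : K} {α : F}
    (h : γ ^ (n * Module.finrank F K * w) = algebraMap F K α) :
    (Algebra.norm F γ ^ w) ^ n = α := by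
  set d := Module.finrank F K
  have hM : n * d * w ≠ 0 := by simp [hn, hw0, d, Module.finrank_pos.ne']
  have hγ : (γ ^ d) ^ (n * d * w) = algebraMap F K (Algebra.norm F γ) ^ (n * d * w) := by
    rw [← map_pow, ← map_pow, h, Algebra.norm_algebraMap, map_pow, ← h, pow_right_comm]
  have key := pow_eq_pow_of_pow_eq_pow hw hM hγ
  apply (algebraMap F K).injective
  rw [← h, map_pow, map_pow, ← key, ← pow_mul, ← pow_mul]
  ring_nf

theorem PadicInt.finite_quotient_span_pow (p : ℕ) [Fact p.Prime] (n : ℕ) :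
    Finite (ℤ_[p] ⧸ Ideal.span {(p : ℤ_[p]) ^ n}) := by
  rw [← PadicInt.ker_toZModPow]
  exact .of_equiv _
    (RingHom.quotientKerEquivOfSurjective (ZMod.ringHom_surjective _)).symm.toEquiv

namespace Padic

variable {p : ℕ} [Fact p.Prime] {K : Type*} [Field K] [Algebra ℚ_[p] K]

theorem natCast_p_ne_zero : (p : K) ≠ 0 := by
  rw [← map_natCast (algebraMap ℚ_[p] K)]
  exact (map_ne_zero _).mpr (Nat.cast_ne_zero.mpr (Fact.out : p.Prime).ne_zero)

section IntegralClosure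

variable [Algebra ℤ_[p] K] [IsScalarTower ℤ_[p] ℚ_[p] K]

theorem norm_le_one_of_isIntegral_algebraMap {c : ℚ_[p]}
    (h : IsIntegral ℤ_[p] (algebraMap ℚ_[p] K c)) : ‖c‖ ≤ 1 := by
  obtain ⟨y, rfl⟩ := IsIntegrallyClosed.isIntegral_iff.mp
    ((isIntegral_algebraMap_iff (algebraMap ℚ_[p] K).injective).mp h)
  exact y.norm_le_one

theorem pow_dvd_of_natCast_eq_mul {ℓ k : ℕ} {t : K} (ht : t ∈ integralClosure ℤ_[p] K)
    (h : (ℓ : K) = (p : K) ^ k * t) : p ^ k ∣ ℓ := by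
  have hp : (p : ℚ_[p]) ^ k ≠ 0 :=
    pow_ne_zero k (Nat.cast_ne_zero.mpr (Fact.out : p.Prime).ne_zero)
  have hc : algebraMap ℚ_[p] K ((ℓ : ℚ_[p]) / (p : ℚ_[p]) ^ k) = t := by
    rw [map_div₀, map_pow, map_natCast, map_natCast, h, mul_div_cancel_left₀]
    exact pow_ne_zero k natCast_p_ne_zero
  have hnorm := norm_le_one_of_isIntegral_algebraMap (hc ▸ ht)
  rw [norm_div, div_le_one (norm_pos_iff.mpr hp), norm_p_pow] at hnorm
  exact_mod_cast (norm_int_le_pow_iff_dvd (ℓ : ℤ) k).mp (by exact_mod_cast hnorm)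

theorem eq_zero_of_one_add_sq_mul_pow_eq_one {z : K} (hz : z ∈ integralClosure ℤ_[p] K)
    {ℓ : ℕ} (hℓ : ¬ p ^ 2 ∣ ℓ) (h : (1 + (p : K) ^ 2 * z) ^ ℓ = 1) : z = 0 := by
  have ha : (p : K) ^ 2 * z ∈ integralClosure ℤ_[p] K :=
    mul_mem (pow_mem (natCast_mem _ p) 2) hz
  obtain ⟨s, hs, hexp⟩ := exists_one_add_pow_eq ha ℓ
  have : (p : K) ^ 2 * z * (ℓ + (p : K) ^ 2 * z * s) = 0 := by linear_combination h - hexp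
  rcases mul_eq_zero.mp this with h0 | h0
  · exact (mul_eq_zero.mp h0).resolve_left (pow_ne_zero 2 natCast_p_ne_zero)
  · exact (hℓ (pow_dvd_of_natCast_eq_mul (neg_mem (mul_mem hz hs))
      (by linear_combination h0))).elim

theorem eq_one_of_isOfFinOrder_one_add_sq_mul {z : K} (hz : z ∈ integralClosure ℤ_[p] K)
    (h : IsOfFinOrder (1 + (p : K) ^ 2 * z)) : 1 + (p : K) ^ 2 * z = 1 := by
  set u := 1 + (p : K) ^ 2 * z
  by_contra hu
  -- some power of `u` has prime order `ℓ`, and it still lies in `1 + p²O`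
  obtain ⟨ℓ, hℓ, hℓu⟩ := Nat.exists_prime_and_dvd (orderOf_eq_one_iff.not.mpr hu)
  have hv := orderOf_pow_orderOf_div h.orderOf_pos.ne' hℓu
  obtain ⟨s, hs, hexp⟩ := exists_one_add_pow_eq
    (mul_mem (pow_mem (natCast_mem (integralClosure ℤ_[p] K) p) 2) hz) (orderOf u / ℓ)
  set k := orderOf u / ℓ
  have hv' : u ^ k = 1 + (p : K) ^ 2 * (z * (k + (p : K) ^ 2 * z * s)) := by rw [hexp]; ring
  have hz' : z * (k + (p : K) ^ 2 * z * s) ∈ integralClosure ℤ_[p] K :=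
    mul_mem hz (add_mem (natCast_mem _ k)
      (mul_mem (mul_mem (pow_mem (natCast_mem _ p) 2) hz) hs))
  have hℓ2 : ¬ p ^ 2 ∣ ℓ := fun hdvd =>
    (Fact.out : p.Prime).not_isUnit (hℓ.squarefree p (by rwa [← sq]))
  have := eq_zero_of_one_add_sq_mul_pow_eq_one hz' hℓ2
    (by rw [← hv', ← hv, pow_orderOf_eq_one])
  rw [hv', this, mul_zero, add_zero, orderOf_one] at hv
  exact hℓ.one_lt.ne hv

theorem finite_setOf_isOfFinOrder [FiniteDimensional ℚ_[p] K] :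
    {x : K | IsOfFinOrder x}.Finite := by
  set O := integralClosure ℤ_[p] K
  have : Module.Finite ℤ_[p] O := IsIntegralClosure.finite ℤ_[p] ℚ_[p] K O
  set I : Ideal ℤ_[p] := Ideal.span {(p : ℤ_[p]) ^ 2}
  have : Finite (ℤ_[p] ⧸ I) := PadicInt.finite_quotient_span_pow p 2
  set N : Submodule ℤ_[p] O := I • ⊤
  have : Finite (O ⧸ N) := Module.finite_of_finite (ℤ_[p] ⧸ I)
  have hO (x : K) (hx : IsOfFinOrder x) : x ∈ O := by
    obtain ⟨n, hn, hxn⟩ := isOfFinOrder_iff_pow_eq_one.mp hx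
    exact IsIntegral.of_pow hn (hxn ▸ isIntegral_one)
  refine Set.finite_coe_iff.mp (Finite.of_injective
    (fun x : {x : K // IsOfFinOrder x} => Submodule.Quotient.mk (p := N) ⟨x.1, hO x x.2⟩) ?_)
  rintro ⟨a, ha⟩ ⟨b, hb⟩ hab
  rw [Submodule.Quotient.eq] at hab
  simp only [N, I, Submodule.ideal_span_singleton_smul,
    Submodule.mem_smul_pointwise_iff_exists] at hab
  obtain ⟨z, -, hz⟩ := hab
  have hz : a - b = (p : K) ^ 2 * z := by
    simpa [Algebra.smul_def] using (congrArg Subtype.val hz).symm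
  set c := a ^ (orderOf a - 1)
  have hac : a * c = 1 := by
    rw [← pow_succ', Nat.sub_add_cancel ha.orderOf_pos, pow_orderOf_eq_one]
  have hbc : b * c = 1 + (p : K) ^ 2 * (-(z * c)) := by linear_combination hac - c * hz
  have hbc1 := eq_one_of_isOfFinOrder_one_add_sq_mul
    (neg_mem (mul_mem z.2 (pow_mem (hO a ha) _))) (hbc ▸ hb.mul ha.pow)
  exact Subtype.ext (mul_right_cancel₀ (right_ne_zero_of_mul_eq_one hac)
    (hac.trans (hbc.trans hbc1).symm))

end IntegralClosure

theorem exists_pow_eq_one_of_isOfFinOrder [FiniteDimensional ℚ_[p] K] :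
    ∃ w, 0 < w ∧ ∀ x : K, IsOfFinOrder x → x ^ w = 1 := by
  let : Algebra ℤ_[p] K := Algebra.compHom K (algebraMap ℤ_[p] ℚ_[p])
  have : IsScalarTower ℤ_[p] ℚ_[p] K := .of_algebraMap_eq fun _ => rfl
  exact _root_.exists_pow_eq_one_of_isOfFinOrder (finite_setOf_isOfFinOrder (p := p))

end Padic

/-- Let `K` be a finite extension of the `p`-adic field `ℚ_p` and fix `n ≥ 1`.  Then there is
`m ≥ 1` such that every element of `ℚ_p` that is an `m`-th power in `K` is an `n`-th power
in `ℚ_p`. -/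
theorem padic_power_descent (p : ℕ) [Fact p.Prime] (K : Type*) [Field K]
    [Algebra ℚ_[p] K] [FiniteDimensional ℚ_[p] K] (n : ℕ) (hn : 1 ≤ n) :
    ∃ m : ℕ, 1 ≤ m ∧ ∀ α : ℚ_[p],
      (∃ γ : K, γ ^ m = algebraMap ℚ_[p] K α) → ∃ δ : ℚ_[p], δ ^ n = α := by
  obtain ⟨w, hw0, hw⟩ := Padic.exists_pow_eq_one_of_isOfFinOrder (p := p) (K := K)
  refine ⟨n * Module.finrank ℚ_[p] K * w,
    Nat.mul_pos (Nat.mul_pos hn Module.finrank_pos) hw0, ?_⟩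
  rintro α ⟨γ, hγ⟩
  exact ⟨_, norm_pow_pow_eq_of_pow_eq_algebraMap hw hw0.ne' (by omega) hγ⟩
end
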